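/- arXiv:2303.05247 — 15 statements merged into one kernel-verified Lean document; each statement's English description precedes it below -/
import Mathlib

section
/- Let n ≥ 2 be an integer, k1, k2 > 0, and k31, k32 ≥ 0 with k31² + k32² ≠ 0. Then the stiffness matrix L of the diatomic chain is symmetric and negative definite (in particular invertible), and L has 2n pairwise distinct real eigenvalues, all of which are negative. -/
/-- The stiffness matrix `L` of the diatomic chain with alternating spring constants
`k1, k2` and boundary spring constants `k31, k32` (0-based indexing of `Fin (2*n)`). -/
def stiffL (n : ℕ) (k1 k2 k31 k32 : ℝ) : Matrix (Fin (2*n)) (Fin (2*n)) ℝ :=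
  Matrix.of fun i j =>
    if (i : ℕ) = (j : ℕ) then
      (if (i : ℕ) = 0 then -(k31 + k1)
       else if (i : ℕ) = 2*n - 1 then -(k1 + k32)
       else -(k1 + k2))
    else if (i : ℕ) + 1 = (j : ℕ) then (if (i : ℕ) % 2 = 0 then k1 else k2)
    else if (j : ℕ) + 1 = (i : ℕ) then (if (j : ℕ) % 2 = 0 then k1 else k2)
    else 0

/-!
`-L` is a weighted path Laplacian plus two boundary springs: for every `x`,
`-2 xᵀ L x = 2 (k31 x₀² + k32 x₂ₙ₋₁²) + ∑ᵢⱼ Lᵢⱼ (xᵢ - xⱼ)²`, a sum of nonnegative terms. It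
vanishes only if `x` is constant along the chain (the springs `k1, k2` are positive) and is then
killed by a nonzero boundary spring, so only for `x = 0`. The eigenvalues of the symmetric
matrix `L` are therefore real and negative. They are simple because `L` is tridiagonal with
nonzero off-diagonal entries: the eigenvalue equation determines an eigenvector recursively from
its first coordinate, so a suitable combination of two orthonormal eigenvectors for a repeated
eigenvalue would be a nonzero eigenvector vanishing there.
-/

open Matrix

theorem Fin.sum_ite_val_eq {M : Type*} [AddCommMonoid M] {N : ℕ} (m : ℕ) (a : M) :
    ∑ j : Fin N, (if (j : ℕ) = m then a else 0) = if m < N then a else 0 := by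
  rw [Fin.sum_univ_eq_sum_range (fun j => if j = m then a else 0), Finset.sum_ite_eq']
  simp

theorem Matrix.IsSymm.two_mul_dotProduct_mulVec {ι R : Type*} [Fintype ι] [CommRing R]
    {A : Matrix ι ι R} (hA : A.IsSymm) (x : ι → R) :
    2 * (x ⬝ᵥ A *ᵥ x) =
      2 * ∑ i, (∑ j, A i j) * x i ^ 2 - ∑ i, ∑ j, A i j * (x i - x j) ^ 2 := by
  have hswap : ∑ i, ∑ j, A i j * x j ^ 2 = ∑ i, ∑ j, A i j * x i ^ 2 := by
    rw [Finset.sum_comm]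
    simp_rw [hA.apply]
  have hexp : ∑ i, ∑ j, A i j * (x i - x j) ^ 2 =
      ∑ i, ∑ j, A i j * x i ^ 2 + ∑ i, ∑ j, A i j * x j ^ 2
        - 2 * ∑ i, ∑ j, x i * (A i j * x j) := by
    simp only [Finset.mul_sum, ← Finset.sum_add_distrib, ← Finset.sum_sub_distrib]
    exact Finset.sum_congr rfl fun i _ => Finset.sum_congr rfl fun j _ => by ring
  have hquad : x ⬝ᵥ A *ᵥ x = ∑ i, ∑ j, x i * (A i j * x j) := by
    simp only [dotProduct, mulVec, Finset.mul_sum]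
  rw [hexp, hswap, hquad]
  simp only [Finset.sum_mul]
  ring

open scoped ComplexOrder in
theorem Matrix.IsHermitian.eigenvalues_neg_of_posDef_neg {ι 𝕜 : Type*} [Fintype ι]
    [DecidableEq ι] [RCLike 𝕜] {A : Matrix ι ι 𝕜} (hA : A.IsHermitian) (hneg : (-A).PosDef)
    (i : ι) : hA.eigenvalues i < 0 := by
  have hv : (⇑(hA.eigenvectorBasis i) : ι → 𝕜) ≠ 0 := by
    simpa using hA.eigenvectorBasis.orthonormal.ne_zero i
  rw [hA.eigenvalues_eq]
  simpa [neg_mulVec] using hneg.re_dotProduct_pos hv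

theorem Matrix.eq_zero_of_mulVec_eq_smul_of_superdiag {K : Type*} [Field K] {N : ℕ}
    {A : Matrix (Fin N) (Fin N) K} (hA : ∀ i j : Fin N, (i : ℕ) + 1 < j → A i j = 0)
    (hsup : ∀ i j : Fin N, (i : ℕ) + 1 = j → A i j ≠ 0) {μ : K} {v : Fin N → K}
    (hv : A *ᵥ v = μ • v) (k : Fin N) (hk : (k : ℕ) = 0) (hvk : v k = 0) : v = 0 := by
  suffices h : ∀ m (hm : m < N), v ⟨m, hm⟩ = 0 from funext fun i => h i i.isLt
  intro m
  induction m using Nat.strong_induction_on with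
  | _ m ih =>
  rcases m with _ | m
  · intro hm; rwa [show (⟨0, hm⟩ : Fin N) = k from Fin.ext hk.symm]
  intro hm
  have hrow := congrFun hv ⟨m, by omega⟩
  have hsplit :
      ∑ j, A ⟨m, by omega⟩ j * v j = A ⟨m, by omega⟩ ⟨m + 1, hm⟩ * v ⟨m + 1, hm⟩ := by
    refine Finset.sum_eq_single _ (fun j _ hj => ?_) (by simp)
    rcases lt_trichotomy (j : ℕ) (m + 1) with h | h | h
    · rw [ih j (by omega) j.isLt, mul_zero]
    · exact absurd (Fin.ext h) hj
    · rw [hA _ _ (by simp; omega), zero_mul]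
  simp only [mulVec, dotProduct, Pi.smul_apply, smul_eq_mul, hsplit, ih m (by omega),
    mul_zero] at hrow
  exact (mul_eq_zero.1 hrow).resolve_left (hsup ⟨m, by omega⟩ ⟨m + 1, hm⟩ rfl)

theorem Matrix.IsHermitian.eigenvalues_injective {ι 𝕜 : Type*} [Fintype ι] [DecidableEq ι]
    [RCLike 𝕜] {A : Matrix ι ι 𝕜} (hA : A.IsHermitian) (k : ι)
    (h : ∀ (μ : 𝕜) (v : ι → 𝕜), A *ᵥ v = μ • v → v k = 0 → v = 0) :
    Function.Injective hA.eigenvalues := by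
  intro i j hij
  by_contra hne
  set B := hA.eigenvectorBasis
  have hB : ∀ l, A *ᵥ ⇑(B l) = (hA.eigenvalues l : 𝕜) • ⇑(B l) := fun l => by
    rw [hA.mulVec_eigenvectorBasis, RCLike.real_smul_eq_coe_smul (K := 𝕜)]
  set u : EuclideanSpace 𝕜 ι := B i k • B j - B j k • B i
  have hu : u = 0 := by
    have hu_eig : A *ᵥ ⇑u = (hA.eigenvalues j : 𝕜) • ⇑u := by
      simp [u, mulVec_sub, mulVec_smul, hB, hij]
      module
    exact (WithLp.ofLp_eq_zero 2).1 (h _ _ hu_eig (by simp [u, mul_comm]))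
  have hik : B i k = 0 := by
    have := congrArg (inner 𝕜 (B j)) hu
    simpa [u, inner_sub_right, inner_smul_right, B.orthonormal.inner_eq_zero (Ne.symm hne)]
      using this
  exact B.orthonormal.ne_zero i ((WithLp.ofLp_eq_zero 2).1 (h _ _ (hB i) hik))

section
variable {n : ℕ} {k1 k2 k31 k32 : ℝ}

theorem stiffL_isSymm : (stiffL n k1 k2 k31 k32).IsSymm := by
  ext i j
  simp only [Matrix.transpose_apply, stiffL, Matrix.of_apply]
  split_ifs <;> first | rfl | omega

theorem stiffL_apply_eq_zero {i j : Fin (2 * n)} (h : (i : ℕ) + 1 < j) :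
    stiffL n k1 k2 k31 k32 i j = 0 := by
  simp only [stiffL, Matrix.of_apply]
  split_ifs <;> first | rfl | omega

theorem stiffL_apply_pos (hk1 : 0 < k1) (hk2 : 0 < k2) {i j : Fin (2 * n)}
    (h : (i : ℕ) + 1 = j) : 0 < stiffL n k1 k2 k31 k32 i j := by
  simp only [stiffL, Matrix.of_apply]
  split_ifs <;> first | assumption | omega

theorem stiffL_apply_nonneg (hk1 : 0 ≤ k1) (hk2 : 0 ≤ k2) {i j : Fin (2 * n)} (h : i ≠ j) :
    0 ≤ stiffL n k1 k2 k31 k32 i j := by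
  simp only [stiffL, Matrix.of_apply]
  split_ifs <;> first | assumption | rfl | exact absurd (Fin.ext ‹_›) h

theorem sum_stiffL_apply (i : Fin (2 * n)) :
    ∑ j, stiffL n k1 k2 k31 k32 i j =
      -((if (i : ℕ) = 0 then k31 else 0) + (if (i : ℕ) = 2 * n - 1 then k32 else 0)) := by
  have hentry : ∀ j : Fin (2 * n), stiffL n k1 k2 k31 k32 i j =
      (if (j : ℕ) = i then stiffL n k1 k2 k31 k32 i i else 0)
      + (if (j : ℕ) = i + 1 then (if (i : ℕ) % 2 = 0 then k1 else k2) else 0)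
      + (if (j : ℕ) = i - 1 then
          (if (i : ℕ) = 0 then 0 else if (i - 1 : ℕ) % 2 = 0 then k1 else k2) else 0) := by
    intro j
    simp only [stiffL, Matrix.of_apply]
    split_ifs <;> first | omega | ring
  rw [Finset.sum_congr rfl fun j _ => hentry j]
  simp only [Finset.sum_add_distrib, Fin.sum_ite_val_eq]
  simp only [stiffL, Matrix.of_apply, if_true]
  have := i.isLt
  split_ifs <;> first | omega | ring

theorem eq_of_forall_stiffL_mul_sq_eq_zero (hk1 : 0 < k1) (hk2 : 0 < k2) {x : Fin (2 * n) → ℝ}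
    (hx : ∀ i j, stiffL n k1 k2 k31 k32 i j * (x i - x j) ^ 2 = 0) (i j : Fin (2 * n)) :
    x i = x j := by
  suffices h : ∀ m (hm : m < 2 * n), x ⟨m, hm⟩ = x ⟨0, by omega⟩ by
    rw [h i i.isLt, h j j.isLt]
  intro m
  induction m with
  | zero => intro; rfl
  | succ m ih =>
    intro hm
    have hedge := hx ⟨m, by omega⟩ ⟨m + 1, hm⟩
    rw [mul_eq_zero, or_iff_right (stiffL_apply_pos hk1 hk2 rfl).ne', sq_eq_zero_iff,
      sub_eq_zero] at hedge
    rw [← hedge, ih]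

theorem two_mul_dotProduct_stiffL_mulVec (x : Fin (2 * n) → ℝ) :
    2 * (x ⬝ᵥ stiffL n k1 k2 k31 k32 *ᵥ x) =
      -(2 * ∑ i : Fin (2 * n), ((if (i : ℕ) = 0 then k31 else 0)
          + (if (i : ℕ) = 2 * n - 1 then k32 else 0)) * x i ^ 2
        + ∑ i, ∑ j, stiffL n k1 k2 k31 k32 i j * (x i - x j) ^ 2) := by
  rw [stiffL_isSymm.two_mul_dotProduct_mulVec]
  simp only [sum_stiffL_apply, neg_mul, Finset.sum_neg_distrib]
  ring

theorem stiffL_neg_posDef (hk1 : 0 < k1) (hk2 : 0 < k2) (h31 : 0 ≤ k31) (h32 : 0 ≤ k32)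
    (hne : k31 ^ 2 + k32 ^ 2 ≠ 0) : (-stiffL n k1 k2 k31 k32).PosDef := by
  refine PosDef.of_dotProduct_mulVec_pos (isHermitian_iff_isSymm.2 stiffL_isSymm).neg
    fun x hx => ?_
  rw [star_trivial, neg_mulVec, dotProduct_neg, neg_pos]
  set b : Fin (2 * n) → ℝ := fun i =>
    (if (i : ℕ) = 0 then k31 else 0) + (if (i : ℕ) = 2 * n - 1 then k32 else 0)
  have hb : ∀ i ∈ Finset.univ, 0 ≤ b i * x i ^ 2 := fun i _ =>
    mul_nonneg (add_nonneg (by split_ifs <;> simp [h31]) (by split_ifs <;> simp [h32]))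
      (sq_nonneg _)
  have hterm : ∀ i, ∀ j ∈ Finset.univ, 0 ≤ stiffL n k1 k2 k31 k32 i j * (x i - x j) ^ 2 := by
    intro i j _
    rcases eq_or_ne i j with rfl | hij
    · simp
    · exact mul_nonneg (stiffL_apply_nonneg hk1.le hk2.le hij) (sq_nonneg _)
  have hs : ∀ i ∈ Finset.univ, 0 ≤ ∑ j, stiffL n k1 k2 k31 k32 i j * (x i - x j) ^ 2 :=
    fun i _ => Finset.sum_nonneg (hterm i)
  have henergy :=
    two_mul_dotProduct_stiffL_mulVec (k1 := k1) (k2 := k2) (k31 := k31) (k32 := k32) x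
  by_contra! hle
  have hB := (Finset.sum_eq_zero_iff_of_nonneg hb).1
    (by linarith [Finset.sum_nonneg hb, Finset.sum_nonneg hs])
  have hS := (Finset.sum_eq_zero_iff_of_nonneg hs).1
    (by linarith [Finset.sum_nonneg hb, Finset.sum_nonneg hs])
  have hconst := eq_of_forall_stiffL_mul_sq_eq_zero hk1 hk2 fun i j =>
    (Finset.sum_eq_zero_iff_of_nonneg (hterm i)).1 (hS i (Finset.mem_univ _)) j
      (Finset.mem_univ _)
  obtain ⟨i, hi⟩ := Function.ne_iff.1 hx
  have := i.isLt
  have hsq : x i ^ 2 ≠ 0 := pow_ne_zero 2 hi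
  have h0 := hB ⟨0, by omega⟩ (Finset.mem_univ _)
  have hlast := hB ⟨2 * n - 1, by omega⟩ (Finset.mem_univ _)
  simp only [b, hconst _ i, mul_eq_zero, hsq, or_false] at h0 hlast
  rw [if_true, if_neg (by omega), add_zero] at h0
  rw [if_neg (by omega), if_true, zero_add] at hlast
  exact hne (by rw [h0, hlast]; ring)
end

theorem stmt0_general (n : ℕ) (k1 k2 k31 k32 : ℝ)
    (hk1 : 0 < k1) (hk2 : 0 < k2) (h31 : 0 ≤ k31) (h32 : 0 ≤ k32)
    (hne : k31 ^ 2 + k32 ^ 2 ≠ 0) :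
    (stiffL n k1 k2 k31 k32).IsSymm ∧
    (-(stiffL n k1 k2 k31 k32)).PosDef ∧
    IsUnit (stiffL n k1 k2 k31 k32).det ∧
    ∃ μ : Fin (2*n) → ℝ, Function.Injective μ ∧ (∀ i, μ i < 0) ∧
      ∀ i, ∃ v : Fin (2*n) → ℝ, v ≠ 0 ∧
        (stiffL n k1 k2 k31 k32).mulVec v = μ i • v := by
  have hL : (stiffL n k1 k2 k31 k32).IsHermitian := isHermitian_iff_isSymm.2 stiffL_isSymm
  have hpd : (-stiffL n k1 k2 k31 k32).PosDef := stiffL_neg_posDef hk1 hk2 h31 h32 hne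
  refine ⟨stiffL_isSymm, hpd, ?_, hL.eigenvalues, fun i j hij => ?_,
    hL.eigenvalues_neg_of_posDef_neg hpd, fun i => ⟨_, ?_, hL.mulVec_eigenvectorBasis i⟩⟩
  · exact (isUnit_iff_isUnit_det _).1 (by simpa using hpd.isUnit.neg)
  · refine hL.eigenvalues_injective ⟨0, i.pos⟩ (fun μ v hv h0 => ?_) hij
    exact eq_zero_of_mulVec_eq_smul_of_superdiag (fun _ _ => stiffL_apply_eq_zero)
      (fun _ _ h => (stiffL_apply_pos hk1 hk2 h).ne') hv _ rfl h0
  · simpa using hL.eigenvectorBasis.orthonormal.ne_zero i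

/-- The stiffness matrix of the diatomic chain is symmetric and negative definite
(in particular invertible), and it has `2n` pairwise distinct real eigenvalues, all
of which are negative. -/
theorem stmt0 (n : ℕ) (hn : 2 ≤ n) (k1 k2 k31 k32 : ℝ)
    (hk1 : 0 < k1) (hk2 : 0 < k2) (h31 : 0 ≤ k31) (h32 : 0 ≤ k32)
    (hne : k31 ^ 2 + k32 ^ 2 ≠ 0) :
    (stiffL n k1 k2 k31 k32).IsSymm ∧
    (-(stiffL n k1 k2 k31 k32)).PosDef ∧
    IsUnit (stiffL n k1 k2 k31 k32).det ∧
    ∃ μ : Fin (2*n) → ℝ, Function.Injective μ ∧ (∀ i, μ i < 0) ∧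
      ∀ i, ∃ v : Fin (2*n) → ℝ, v ≠ 0 ∧
        (stiffL n k1 k2 k31 k32).mulVec v = μ i • v :=
  stmt0_general n k1 k2 k31 k32 hk1 hk2 h31 h32 hne
end

section
/- Let n ≥ 2 be an integer, k1, k2 > 0, and k31 = k32 ≥ 0. If u ∈ ℝ^{2n} and μ ∈ ℝ satisfy Lu = μu, then the reversed vector u′ defined by u′_j = u_{2n+1−j} (1 ≤ j ≤ 2n) also satisfies Lu′ = μu′. Moreover, if u ≠ 0 then there exists a real constant c ≠ 0 such that u = c·u′. -/
/-!
Reversal `i ↦ 2n - 1 - i` is a symmetry of the chain when both boundary springs agree,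
so the reversed vector is again an eigenvector. On the other hand `L` is tridiagonal with nonzero
off-diagonal entries, so row `i` of `Lu = μu` determines `u (i+1)` from `u 0, …, u i`: an
eigenvector is fixed by its first entry, the eigenspace is a line, and `u` is a multiple of its
reversal.
-/

open Matrix

theorem Matrix.eq_zero_of_mulVec_eq_smul_of_hessenberg {R : Type*} [Ring R] [NoZeroDivisors R]
    {N : ℕ} {A : Matrix (Fin N) (Fin N) R}
    (hA : ∀ i j : Fin N, (i : ℕ) + 1 < j → A i j = 0)
    (hsup : ∀ i j : Fin N, (i : ℕ) + 1 = j → A i j ≠ 0)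
    {v : Fin N → R} {μ : R} (hv : A *ᵥ v = μ • v) (hN : 0 < N) (h0 : v ⟨0, hN⟩ = 0) :
    v = 0 := by
  suffices h : ∀ m : ℕ, ∀ i : Fin N, (i : ℕ) ≤ m → v i = 0 from
    funext fun i => h i i le_rfl
  intro m
  induction m with
  | zero => exact fun i hi => (Fin.ext (Nat.le_zero.1 hi) : i = ⟨0, hN⟩) ▸ h0
  | succ m ih =>
    intro i hi
    rcases Nat.lt_or_ge (i : ℕ) (m + 1) with hlt | hge
    · exact ih i (by omega)
    let j : Fin N := ⟨m, by omega⟩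
    have hrow : A j i * v i = 0 := by
      have hsum : (A *ᵥ v) j = A j i * v i := Fintype.sum_eq_single i fun k hki => by
        rcases Nat.lt_or_ge (k : ℕ) (m + 1) with hk | hk
        · exact mul_eq_zero_of_right _ (ih k (by omega))
        · exact mul_eq_zero_of_left (hA j k (by simp only [j]; omega)) _
      rw [← hsum, hv, Pi.smul_apply, ih j le_rfl, smul_zero]
    exact (mul_eq_zero.1 hrow).resolve_left (hsup j i (by simp only [j]; omega))

theorem Matrix.eq_smul_of_mulVec_eq_smul_of_hessenberg {K : Type*} [Field K]
    {N : ℕ} {A : Matrix (Fin N) (Fin N) K}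
    (hA : ∀ i j : Fin N, (i : ℕ) + 1 < j → A i j = 0)
    (hsup : ∀ i j : Fin N, (i : ℕ) + 1 = j → A i j ≠ 0)
    {v w : Fin N → K} {μ : K} (hv : A *ᵥ v = μ • v) (hw : A *ᵥ w = μ • w)
    (hN : 0 < N) (hw0 : w ⟨0, hN⟩ ≠ 0) :
    v = (v ⟨0, hN⟩ / w ⟨0, hN⟩) • w := by
  set c := v ⟨0, hN⟩ / w ⟨0, hN⟩
  have hdiff : A *ᵥ (v - c • w) = μ • (v - c • w) := by
    rw [mulVec_sub, mulVec_smul, hv, hw, smul_sub, smul_comm]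
  have hdiff0 : (v - c • w) ⟨0, hN⟩ = 0 := by
    simp only [Pi.sub_apply, Pi.smul_apply, smul_eq_mul, c, div_mul_cancel₀ _ hw0, sub_self]
  exact sub_eq_zero.1 (eq_zero_of_mulVec_eq_smul_of_hessenberg hA hsup hdiff hN hdiff0)

section stiffL

variable {n : ℕ} {k1 k2 k3 : ℝ}

theorem stiffL_apply_rev_rev (i j : Fin (2 * n)) :
    stiffL n k1 k2 k3 k3 i.rev j.rev = stiffL n k1 k2 k3 k3 i j := by
  have := i.isLt
  have := j.isLt
  simp only [stiffL, of_apply, Fin.val_rev]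
  split_ifs <;> first | rfl | ring1 | omega

theorem stiffL_mulVec_rev (v : Fin (2 * n) → ℝ) :
    stiffL n k1 k2 k3 k3 *ᵥ (fun i => v i.rev) =
      fun i => (stiffL n k1 k2 k3 k3 *ᵥ v) i.rev := by
  ext i
  rw [mulVec, dotProduct, ← Equiv.sum_comp Fin.revPerm]
  simp only [Fin.revPerm_apply, Fin.rev_rev, ← stiffL_apply_rev_rev i.rev, mulVec, dotProduct]

theorem stiffL_apply_eq_zero_of_add_one_lt {k31 k32 : ℝ} {i j : Fin (2 * n)}
    (hij : (i : ℕ) + 1 < j) : stiffL n k1 k2 k31 k32 i j = 0 := by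
  simp only [stiffL, of_apply]
  split_ifs <;> first | rfl | omega

theorem stiffL_apply_ne_zero_of_add_one_eq {k31 k32 : ℝ} (hk1 : k1 ≠ 0) (hk2 : k2 ≠ 0)
    {i j : Fin (2 * n)} (hij : (i : ℕ) + 1 = j) : stiffL n k1 k2 k31 k32 i j ≠ 0 := by
  simp only [stiffL, of_apply]
  split_ifs <;> first | assumption | omega

end stiffL

theorem stmt1_general (n : ℕ) (k1 k2 k3 : ℝ)
    (hk1 : 0 < k1) (hk2 : 0 < k2)
    (u : Fin (2*n) → ℝ) (μ : ℝ)
    (hu : (stiffL n k1 k2 k3 k3).mulVec u = μ • u) :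
    (stiffL n k1 k2 k3 k3).mulVec (fun i => u i.rev) = μ • (fun i => u i.rev) ∧
    (u ≠ 0 → ∃ c : ℝ, c ≠ 0 ∧ u = c • (fun i => u i.rev)) := by
  have hrev : stiffL n k1 k2 k3 k3 *ᵥ (fun i => u i.rev) = μ • fun i => u i.rev := by
    rw [stiffL_mulVec_rev, hu]
    rfl
  refine ⟨hrev, fun hne => ?_⟩
  have hA : ∀ i j : Fin (2 * n), (i : ℕ) + 1 < j → stiffL n k1 k2 k3 k3 i j = 0 :=
    fun _ _ => stiffL_apply_eq_zero_of_add_one_lt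
  have hsup : ∀ i j : Fin (2 * n), (i : ℕ) + 1 = j → stiffL n k1 k2 k3 k3 i j ≠ 0 :=
    fun _ _ => stiffL_apply_ne_zero_of_add_one_eq hk1.ne' hk2.ne'
  obtain ⟨i, -⟩ := Function.ne_iff.1 hne
  have hN : 0 < 2 * n := i.pos
  have hu0 : u ⟨0, hN⟩ ≠ 0 := fun h =>
    hne (eq_zero_of_mulVec_eq_smul_of_hessenberg hA hsup hu hN h)
  have hrev0 : u (Fin.rev ⟨0, hN⟩) ≠ 0 := fun h => hne <| funext fun j => by
    simpa using congrFun (eq_zero_of_mulVec_eq_smul_of_hessenberg hA hsup hrev hN h) j.rev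
  exact ⟨_, div_ne_zero hu0 hrev0,
    eq_smul_of_mulVec_eq_smul_of_hessenberg hA hsup hu hrev hN hrev0⟩

/-- If `k31 = k32`, eigenvectors of the stiffness matrix are (up to a nonzero scalar)
equal to their own spatial reversal. -/
theorem stmt1 (n : ℕ) (hn : 2 ≤ n) (k1 k2 k3 : ℝ)
    (hk1 : 0 < k1) (hk2 : 0 < k2) (hk3 : 0 ≤ k3)
    (u : Fin (2*n) → ℝ) (μ : ℝ)
    (hu : (stiffL n k1 k2 k3 k3).mulVec u = μ • u) :
    (stiffL n k1 k2 k3 k3).mulVec (fun i => u i.rev) = μ • (fun i => u i.rev) ∧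
    (u ≠ 0 → ∃ c : ℝ, c ≠ 0 ∧ u = c • (fun i => u i.rev)) :=
  stmt1_general n k1 k2 k3 hk1 hk2 u μ hu
end

section
/- Let k1, k2 > 0, ω ∈ ℝ, and let a be a nonzero real number. Then a is an eigenvalue of the transfer matrix T(ω) if and only if (ω² − k1 − k2)² = (k1 + k2 a)(k1 + k2/a) = k1² + k2² + k1k2(a + 1/a). Moreover, in that case 1/a is also an eigenvalue of T(ω). -/
/-!
`T(ω)` has determinant `1`, so its characteristic polynomial is `b² - (tr T) b + 1` and a nonzero
`b` is an eigenvalue iff `b + 1/b = tr T`; this condition is symmetric under `b ↦ 1/b`. Since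
`k1 k2 · tr T = (ω² - k1 - k2)² - k1² - k2²`, this is the relation in the statement.
-/

/-- The transfer matrix `T(ω)` of the diatomic chain with alternating spring
constants `k1, k2`. -/
noncomputable def transferT (k1 k2 ω : ℝ) : Matrix (Fin 2) (Fin 2) ℝ :=
  (1/(k1*k2)) •
    !![-k1^2, -(k1*(ω^2 - k1 - k2));
       k1*(ω^2 - k1 - k2), (ω^2 - k1 - k2)^2 - k2^2]

namespace Matrix

theorem exists_mulVec_eq_smul_iff_det_sub_eq_zero {n R : Type*} [Fintype n] [DecidableEq n]
    [CommRing R] [IsDomain R] (A : Matrix n n R) (b : R) :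
    (∃ v : n → R, v ≠ 0 ∧ A *ᵥ v = b • v) ↔ (A - b • 1).det = 0 := by
  simp only [← exists_mulVec_eq_zero_iff, sub_mulVec, smul_mulVec, one_mulVec, sub_eq_zero]

theorem det_fin_two_sub_smul_one {R : Type*} [CommRing R] (A : Matrix (Fin 2) (Fin 2) R) (b : R) :
    (A - b • 1).det = b ^ 2 - A.trace * b + A.det := by
  simp [det_fin_two, trace_fin_two]
  ring

variable {K : Type*} [Field K]

theorem exists_mulVec_eq_smul_iff_add_inv_eq_trace (A : Matrix (Fin 2) (Fin 2) K)
    (hA : A.det = 1) {b : K} (hb : b ≠ 0) :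
    (∃ v : Fin 2 → K, v ≠ 0 ∧ A *ᵥ v = b • v) ↔ b + b⁻¹ = A.trace := by
  rw [exists_mulVec_eq_smul_iff_det_sub_eq_zero, det_fin_two_sub_smul_one, hA]
  constructor
  · intro h
    field_simp
    linear_combination h
  · intro h
    field_simp at h
    linear_combination h

theorem exists_mulVec_eq_inv_smul_of_det_eq_one (A : Matrix (Fin 2) (Fin 2) K)
    (hA : A.det = 1) {b : K} (hb : b ≠ 0) (h : ∃ v : Fin 2 → K, v ≠ 0 ∧ A *ᵥ v = b • v) :
    ∃ w : Fin 2 → K, w ≠ 0 ∧ A *ᵥ w = b⁻¹ • w := by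
  rw [exists_mulVec_eq_smul_iff_add_inv_eq_trace A hA hb] at h
  rw [exists_mulVec_eq_smul_iff_add_inv_eq_trace A hA (inv_ne_zero hb), inv_inv, add_comm, h]

end Matrix

section transferT

open Matrix

variable {k1 k2 : ℝ} (ω : ℝ)

theorem det_transferT (hk1 : k1 ≠ 0) (hk2 : k2 ≠ 0) : (transferT k1 k2 ω).det = 1 := by
  rw [transferT, det_smul, det_fin_two_of, Fintype.card_fin]
  field_simp
  ring

theorem trace_transferT :
    (transferT k1 k2 ω).trace = ((ω ^ 2 - k1 - k2) ^ 2 - k1 ^ 2 - k2 ^ 2) / (k1 * k2) := by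
  rw [transferT, trace_smul, trace_fin_two_of, smul_eq_mul]
  ring

theorem exists_mulVec_transferT_eq_smul_iff (hk1 : k1 ≠ 0) (hk2 : k2 ≠ 0) {a : ℝ} (ha : a ≠ 0) :
    (∃ v : Fin 2 → ℝ, v ≠ 0 ∧ (transferT k1 k2 ω) *ᵥ v = a • v) ↔
      (ω ^ 2 - k1 - k2) ^ 2 = k1 ^ 2 + k2 ^ 2 + k1 * k2 * (a + 1 / a) := by
  rw [exists_mulVec_eq_smul_iff_add_inv_eq_trace _ (det_transferT ω hk1 hk2) ha,
    trace_transferT, eq_div_iff (mul_ne_zero hk1 hk2), one_div]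
  constructor <;> intro h <;> linear_combination -h

end transferT

/-- A nonzero real `a` is an eigenvalue of `T(ω)` iff
`(ω² − k1 − k2)² = (k1 + k2 a)(k1 + k2/a) = k1² + k2² + k1k2(a + 1/a)`;
moreover in that case `1/a` is also an eigenvalue of `T(ω)`. -/
theorem stmt5 (k1 k2 ω a : ℝ) (hk1 : 0 < k1) (hk2 : 0 < k2) (ha : a ≠ 0) :
    ((∃ v : Fin 2 → ℝ, v ≠ 0 ∧ (transferT k1 k2 ω).mulVec v = a • v) ↔
      ((ω^2 - k1 - k2)^2 = (k1 + k2*a) * (k1 + k2/a) ∧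
        (k1 + k2*a) * (k1 + k2/a) = k1^2 + k2^2 + k1*k2*(a + 1/a))) ∧
    ((∃ v : Fin 2 → ℝ, v ≠ 0 ∧ (transferT k1 k2 ω).mulVec v = a • v) →
      ∃ w : Fin 2 → ℝ, w ≠ 0 ∧ (transferT k1 k2 ω).mulVec w = (1/a) • w) := by
  have hprod : (k1 + k2*a) * (k1 + k2/a) = k1^2 + k2^2 + k1*k2*(a + 1/a) := by
    field_simp
    ring
  refine ⟨?_, fun h => ?_⟩
  · rw [exists_mulVec_transferT_eq_smul_iff ω hk1.ne' hk2.ne' ha, hprod, and_iff_left rfl]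
  · rw [one_div]
    exact Matrix.exists_mulVec_eq_inv_smul_of_det_eq_one _ (det_transferT ω hk1.ne' hk2.ne') ha h
end

section
/- Let 0 < k1 < k2 and let k31 ∈ ℝ satisfy k31 ≠ k2 and (k31 − k2)² ≠ k2². Then the quadratic polynomial P(x) = (k31 − k2)² k1 x² + [k2(k31 − k2)² − k2³] x − k1 k2² has two distinct real roots of opposite signs; exactly one of the roots lies in the open interval (−1, 1), and the other root has absolute value strictly greater than 1. -/
/-!
Write `q` for the quadratic. Its leading coefficient `A = (k31 - k2)² k1` is positive and its
constant term `-k1 k2²` negative, so `q z = A (z - r) (z - s)` with real roots `s < 0 < r`.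
Since `q 1 = (k1 + k2) ((k31 - k2)² - k2²)` and `q (-1) = (k1 - k2) ((k31 - k2)² - k2²)`,
`q 1 * q (-1) = (k1² - k2²) ((k31 - k2)² - k2²)² < 0`; as this product equals
`A² (1 - r²) (1 - s²)`, exactly one root lies strictly inside the unit interval and the other
strictly outside.
-/

theorem exists_factorization_with_roots_of_opposite_signs {a b c : ℝ} (ha : 0 < a) (hc : 0 < c) :
    ∃ r s : ℝ, s < 0 ∧ 0 < r ∧ ∀ z, a * z ^ 2 + b * z - c = a * (z - r) * (z - s) := by
  have hdisc : 0 ≤ b ^ 2 + 4 * a * c := by positivity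
  obtain ⟨d, hd⟩ : ∃ d, d = √(b ^ 2 + 4 * a * c) := ⟨_, rfl⟩
  have hd_sq : d ^ 2 = b ^ 2 + 4 * a * c := hd ▸ Real.sq_sqrt hdisc
  have hd_gt : |b| < d := by
    rw [← sq_lt_sq₀ (abs_nonneg b) (hd ▸ Real.sqrt_nonneg _), sq_abs, hd_sq]
    nlinarith
  refine ⟨(-b + d) / (2 * a), (-b - d) / (2 * a), ?_, ?_, fun z => ?_⟩
  · exact div_neg_of_neg_of_pos (by linarith [neg_le_abs b]) (by positivity)
  · exact div_pos (by linarith [le_abs_self b]) (by positivity)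
  · field_simp
    linear_combination hd_sq

theorem abs_lt_one_lt_abs_or_of_mul_neg {r s : ℝ} (h : (1 - r ^ 2) * (1 - s ^ 2) < 0) :
    (|r| < 1 ∧ 1 < |s|) ∨ (|s| < 1 ∧ 1 < |r|) := by
  simp only [← sq_lt_one_iff_abs_lt_one, ← one_lt_sq_iff_one_lt_abs]
  rcases mul_neg_iff.mp h with ⟨hr, hs⟩ | ⟨hr, hs⟩
  · exact Or.inl ⟨by linarith, by linarith⟩
  · exact Or.inr ⟨by linarith, by linarith⟩

/-- The quadratic determining the decay rate of a genuine left edge state has two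
real roots of opposite signs, exactly one of which lies in `(−1, 1)` while the
other has absolute value greater than `1`. -/
theorem stmt6 (k1 k2 k31 : ℝ) (hk1 : 0 < k1) (hk12 : k1 < k2)
    (h1 : k31 ≠ k2) (h2 : (k31 - k2)^2 ≠ k2^2) :
    ∃ x y : ℝ,
      (k31 - k2)^2 * k1 * x^2 + (k2*(k31 - k2)^2 - k2^3) * x - k1*k2^2 = 0 ∧
      (k31 - k2)^2 * k1 * y^2 + (k2*(k31 - k2)^2 - k2^3) * y - k1*k2^2 = 0 ∧
      x * y < 0 ∧ |x| < 1 ∧ 1 < |y| ∧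
      ∀ z : ℝ,
        (k31 - k2)^2 * k1 * z^2 + (k2*(k31 - k2)^2 - k2^3) * z - k1*k2^2 = 0 →
        z = x ∨ z = y := by
  have hk2 : 0 < k2 := hk1.trans hk12
  have hA : 0 < (k31 - k2) ^ 2 * k1 := by have := sub_ne_zero.mpr h1; positivity
  obtain ⟨r, s, hs, hr, hq⟩ := exists_factorization_with_roots_of_opposite_signs
    (b := k2 * (k31 - k2) ^ 2 - k2 ^ 3) hA (by positivity : 0 < k1 * k2 ^ 2)
  have hroots : ∀ z, (k31 - k2)^2 * k1 * z^2 + (k2*(k31 - k2)^2 - k2^3) * z - k1*k2^2 = 0 ↔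
      z = r ∨ z = s := by
    intro z
    rw [hq, mul_assoc, mul_eq_zero, or_iff_right hA.ne', mul_eq_zero, sub_eq_zero, sub_eq_zero]
  have hunit : (1 - r ^ 2) * (1 - s ^ 2) < 0 := by
    have hval : ((k31 - k2) ^ 2 * k1) ^ 2 * ((1 - r ^ 2) * (1 - s ^ 2))
        = (k1 ^ 2 - k2 ^ 2) * ((k31 - k2) ^ 2 - k2 ^ 2) ^ 2 := by
      calc _ = ((k31 - k2) ^ 2 * k1 * (1 - r) * (1 - s))
              * ((k31 - k2) ^ 2 * k1 * (-1 - r) * (-1 - s)) := by ring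
        _ = _ := by rw [← hq 1, ← hq (-1)]; ring
    have hk : k1 ^ 2 - k2 ^ 2 < 0 := by nlinarith
    have hgap : 0 < ((k31 - k2) ^ 2 - k2 ^ 2) ^ 2 := by have := sub_ne_zero.mpr h2; positivity
    exact neg_of_mul_neg_right (hval ▸ mul_neg_of_neg_of_pos hk hgap) (sq_nonneg _)
  have hrs : r * s < 0 := mul_neg_of_pos_of_neg hr hs
  rcases abs_lt_one_lt_abs_or_of_mul_neg hunit with ⟨hr1, hs1⟩ | ⟨hs1, hr1⟩
  · exact ⟨r, s, (hroots r).2 (.inl rfl), (hroots s).2 (.inr rfl), hrs, hr1, hs1,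
      fun z hz => (hroots z).1 hz⟩
  · exact ⟨s, r, (hroots s).2 (.inr rfl), (hroots r).2 (.inl rfl), by rwa [mul_comm], hs1, hr1,
      fun z hz => ((hroots z).1 hz).symm⟩
end

section
/- Let n ≥ 2 be an integer, 0 < k1 < k2, and k31, k32 ∈ ℝ. Define u ∈ ℝ^{2n} by u_{2j−1} = u_{2j} = (−1)^{j−1} for 1 ≤ j ≤ n. Then Lu = −2k2·u if and only if k31 = 2k2 and k32 = 2k2. (Thus the chain has a band edge state at the lower edge ω² = 2k2 of the optical band exactly when both boundary springs equal 2k2.) -/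
open Matrix Finset

lemma stiffL_mulVec_apply (n : ℕ) (k1 k2 k31 k32 : ℝ) (q : ℕ → ℝ) (i : Fin (2*n)) :
    (stiffL n k1 k2 k31 k32 *ᵥ fun j => q j) i =
      (if (i : ℕ) = 0 then -(k31 + k1) else if (i : ℕ) = 2*n - 1 then -(k1 + k32)
        else -(k1 + k2)) * q i
      + (if (i : ℕ) + 1 < 2*n then (if (i : ℕ) % 2 = 0 then k1 else k2) * q (i + 1) else 0)
      + (if 1 ≤ (i : ℕ) then (if ((i : ℕ) - 1) % 2 = 0 then k1 else k2) * q (i - 1) else 0) := by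
  obtain ⟨i, hi⟩ := i
  set d := if i = 0 then -(k31 + k1) else if i = 2*n - 1 then -(k1 + k32) else -(k1 + k2)
  set f : ℕ → ℝ := fun j => (if i = j then d * q i else 0) +
      (if i + 1 = j then (if i % 2 = 0 then k1 else k2) * q (i + 1) else 0) +
      (if i - 1 = j ∧ 1 ≤ i then (if (i - 1) % 2 = 0 then k1 else k2) * q (i - 1) else 0) with hf
  have entry (j : Fin (2*n)) : stiffL n k1 k2 k31 k32 ⟨i, hi⟩ j * q j = f j := by
    simp only [stiffL, of_apply, hf]
    split_ifs <;> first | omega | grind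
  simp only [mulVec, dotProduct, entry]
  rw [Fin.sum_univ_eq_sum_range f]
  simp only [hf, sum_add_distrib, ite_and, sum_ite_eq, mem_range]
  rw [if_pos hi, if_pos (show i - 1 < 2*n by omega)]

section NegOnePow

variable {R : Type*} [Ring R]

lemma neg_one_pow_succ_div_two (j : ℕ) :
    (-1 : R) ^ ((j + 1) / 2) = (if j % 2 = 0 then 1 else -1) * (-1) ^ (j / 2) := by
  rcases Nat.even_or_odd' j with ⟨m, rfl | rfl⟩
  · rw [show (2 * m + 1) / 2 = m by omega, show 2 * m / 2 = m by omega, if_pos (by omega),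
      one_mul]
  · rw [show (2 * m + 1 + 1) / 2 = m + 1 by omega, show (2 * m + 1) / 2 = m by omega,
      if_neg (by omega), pow_succ']

lemma neg_one_pow_div_two_eq_mul_succ (j : ℕ) :
    (-1 : R) ^ (j / 2) = (if j % 2 = 0 then 1 else -1) * (-1) ^ ((j + 1) / 2) := by
  rw [neg_one_pow_succ_div_two, ← mul_assoc]
  split_ifs <;> simp

end NegOnePow

lemma stiffL_mulVec_neg_one_pow_div_two (n : ℕ) (k1 k2 k31 k32 : ℝ) (i : Fin (2*n)) :
    (stiffL n k1 k2 k31 k32 *ᵥ fun j => (-1 : ℝ) ^ ((j : ℕ) / 2)) i =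
      (-(2 * k2) + (if (i : ℕ) = 0 then 2 * k2 - k31 else 0)
        + (if (i : ℕ) = 2 * n - 1 then 2 * k2 - k32 else 0)) * (-1) ^ ((i : ℕ) / 2) := by
  obtain ⟨i, hi⟩ := i
  rw [stiffL_mulVec_apply n k1 k2 k31 k32 (fun j => (-1 : ℝ) ^ (j / 2)), neg_one_pow_succ_div_two]
  rcases i with _ | p
  · simp only [Nat.zero_div, pow_zero, mul_one, Nat.zero_mod, if_true, zero_add]
    split_ifs <;> first | omega | ring
  · simp only [Nat.add_sub_cancel, neg_one_pow_div_two_eq_mul_succ p, Nat.add_one_ne_zero,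
      if_false, le_add_iff_nonneg_left, zero_le, if_true]
    split_ifs <;> first | omega | ring

theorem stmt7_general (n : ℕ) (hn : 2 ≤ n) (k1 k2 k31 k32 : ℝ) :
    (stiffL n k1 k2 k31 k32).mulVec (fun i => (-1 : ℝ)^((i : ℕ)/2)) =
        (-(2*k2)) • (fun i : Fin (2*n) => (-1 : ℝ)^((i : ℕ)/2)) ↔
      (k31 = 2*k2 ∧ k32 = 2*k2) := by
  simp only [funext_iff, stiffL_mulVec_neg_one_pow_div_two n, Pi.smul_apply,
    smul_eq_mul, mul_left_inj' (pow_ne_zero _ (by norm_num : (-1 : ℝ) ≠ 0))]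
  constructor
  · intro h
    have h0 := h ⟨0, by omega⟩
    have hlast := h ⟨2*n-1, by omega⟩
    rw [if_pos rfl, if_neg (show 0 ≠ 2*n - 1 by omega)] at h0
    rw [if_neg (show 2*n - 1 ≠ 0 by omega), if_pos rfl] at hlast
    constructor <;> linarith
  · rintro ⟨rfl, rfl⟩ i
    simp

/-- The vector `u` with `u_{2j−1} = u_{2j} = (−1)^{j−1}` is a band edge state at the
lower edge `ω² = 2k2` of the optical band iff both boundary springs equal `2k2`. -/
theorem stmt7 (n : ℕ) (hn : 2 ≤ n) (k1 k2 k31 k32 : ℝ)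
    (hk1 : 0 < k1) (hk12 : k1 < k2) :
    (stiffL n k1 k2 k31 k32).mulVec (fun i => (-1 : ℝ)^((i : ℕ)/2)) =
        (-(2*k2)) • (fun i : Fin (2*n) => (-1 : ℝ)^((i : ℕ)/2)) ↔
      (k31 = 2*k2 ∧ k32 = 2*k2) :=
  stmt7_general n hn k1 k2 k31 k32
end

section
/- Let n ≥ 2 be an integer, 0 < k1 < k2, and k31, k32 ∈ ℝ. Define u ∈ ℝ^{2n} by u_{2j−1} = 1 and u_{2j} = −1 for 1 ≤ j ≤ n. Then Lu = −(2k1 + 2k2)·u if and only if k31 = 2k2 and k32 = 2k2. (Thus the chain has a band edge state at the upper edge ω² = 2k1 + 2k2 of the optical band exactly when both boundary springs equal 2k2.) -/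
open Finset Matrix

lemma sum_range_eq_sum_Ico_of_eq_zero {M : Type*} [AddCommMonoid M] {f : ℕ → M} {m a b : ℕ}
    (hb : b ≤ m) (hf : ∀ j < m, (j < a ∨ b ≤ j) → f j = 0) :
    ∑ j ∈ range m, f j = ∑ j ∈ Ico a b, f j := by
  refine (sum_subset (fun j hj => ?_) fun j hj hj' => hf j (mem_range.1 hj) ?_).symm
  · simp only [mem_Ico, mem_range] at hj ⊢; omega
  · simp only [mem_Ico, mem_range, not_and_or, not_le, not_lt] at hj hj' ⊢; omega

namespace StiffL

variable (n : ℕ) (k1 k2 k31 k32 : ℝ)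

/-- The spring joining sites `i` and `i + 1`. -/
def spring (i : ℕ) : ℝ := if i % 2 = 0 then k1 else k2

lemma spring_add_spring_succ (i : ℕ) : spring k1 k2 i + spring k1 k2 (i + 1) = k1 + k2 := by
  rcases Nat.mod_two_eq_zero_or_one i with h | h <;>
    simp [spring, h, Nat.succ_mod_two_eq_zero_iff, add_comm]

def entry (i j : ℕ) : ℝ :=
  if i = j then
    (if i = 0 then -(k31 + k1)
     else if i = 2*n - 1 then -(k1 + k32)
     else -(k1 + k2))
  else if i + 1 = j then spring k1 k2 i
  else if j + 1 = i then spring k1 k2 j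
  else 0

lemma entry_eq_zero {i j : ℕ} (h : j + 1 < i ∨ i + 1 < j) : entry n k1 k2 k31 k32 i j = 0 := by
  rw [entry, if_neg, if_neg, if_neg] <;> omega

lemma entry_self {i : ℕ} (h0 : i ≠ 0) (h : i ≠ 2*n - 1) :
    entry n k1 k2 k31 k32 i i = -(k1 + k2) := by
  rw [entry, if_pos rfl, if_neg h0, if_neg h]

lemma entry_add_one_right (i : ℕ) : entry n k1 k2 k31 k32 i (i + 1) = spring k1 k2 i := by
  rw [entry, if_neg (by omega), if_pos rfl]

lemma entry_add_one_left (i : ℕ) : entry n k1 k2 k31 k32 (i + 1) i = spring k1 k2 i := by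
  rw [entry, if_neg (by omega), if_neg (by omega), if_pos rfl]

lemma mulVec_alternating_apply_eq_sum (i : Fin (2*n)) :
    (stiffL n k1 k2 k31 k32 *ᵥ fun j => (-1 : ℝ) ^ (j : ℕ)) i =
      ∑ j ∈ range (2*n), entry n k1 k2 k31 k32 i j * (-1) ^ j := by
  rw [← Fin.sum_univ_eq_sum_range (fun j => entry n k1 k2 k31 k32 i j * (-1) ^ j)]
  rfl

lemma sum_entry_first (hn : 0 < n) :
    ∑ j ∈ range (2*n), entry n k1 k2 k31 k32 0 j * (-1) ^ j = -(k31 + 2*k1) := by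
  rw [sum_range_eq_sum_Ico_of_eq_zero (a := 0) (b := 2) (by omega)
    fun j _ hj => by rw [entry_eq_zero n k1 k2 k31 k32 (by omega), zero_mul]]
  have h00 : entry n k1 k2 k31 k32 0 0 = -(k31 + k1) := by simp [entry]
  rw [sum_Ico_eq_sum_range, sum_range_succ, sum_range_one, h00, entry_add_one_right, spring,
    if_pos (Nat.zero_mod 2)]
  ring

lemma sum_entry_last (hn : 0 < n) :
    ∑ j ∈ range (2*n), entry n k1 k2 k31 k32 (2*n - 1) j * (-1) ^ j =
      -(2*k1 + k32) * (-1) ^ (2*n - 1) := by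
  rw [sum_range_eq_sum_Ico_of_eq_zero (a := 2*n - 2) (b := 2*n) le_rfl
    fun j _ hj => by rw [entry_eq_zero n k1 k2 k31 k32 (by omega), zero_mul]]
  obtain ⟨m, hm⟩ : ∃ m, 2*n - 2 = 2*m := ⟨n - 1, by omega⟩
  have hlast : 2*n - 1 = 2*m + 1 := by omega
  have hll : entry n k1 k2 k31 k32 (2*m + 1) (2*m + 1) = -(k1 + k32) := by
    rw [entry, if_pos rfl, if_neg (by omega), if_pos hlast.symm]
  rw [sum_Ico_eq_sum_range, show 2*n - (2*n - 2) = 2 by omega, hm, hlast, sum_range_succ,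
    sum_range_one, add_zero, entry_add_one_left, hll, spring, if_pos (Nat.mul_mod_right 2 m)]
  ring

lemma sum_entry_interior {i : ℕ} (hi0 : 0 < i) (hi : i + 1 < 2*n) :
    ∑ j ∈ range (2*n), entry n k1 k2 k31 k32 i j * (-1) ^ j = -(2*k1 + 2*k2) * (-1) ^ i := by
  rw [sum_range_eq_sum_Ico_of_eq_zero (a := i - 1) (b := i + 2) (by omega)
    fun j _ hj => by rw [entry_eq_zero n k1 k2 k31 k32 (by omega), zero_mul]]
  obtain ⟨m, rfl⟩ : ∃ m, i = m + 1 := ⟨i - 1, by omega⟩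
  rw [sum_Ico_eq_sum_range, show m + 1 + 2 - (m + 1 - 1) = 3 by omega, Nat.add_sub_cancel,
    sum_range_succ, sum_range_succ, sum_range_one, add_zero, entry_add_one_left,
    entry_self n k1 k2 k31 k32 (by omega) (by omega), entry_add_one_right]
  linear_combination (-1 : ℝ) ^ m * spring_add_spring_succ k1 k2 m

lemma mulVec_alternating_apply (hn : 0 < n) (i : Fin (2*n)) :
    (stiffL n k1 k2 k31 k32 *ᵥ fun j => (-1 : ℝ) ^ (j : ℕ)) i =
      -(if (i : ℕ) = 0 then k31 + 2*k1 else if (i : ℕ) = 2*n - 1 then 2*k1 + k32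
        else 2*k1 + 2*k2) * (-1) ^ (i : ℕ) := by
  rw [mulVec_alternating_apply_eq_sum]
  split_ifs with h0 hlast
  · rw [h0, sum_entry_first n k1 k2 k31 k32 hn, pow_zero, mul_one]
  · rw [hlast, sum_entry_last n k1 k2 k31 k32 hn]
  · rw [sum_entry_interior n k1 k2 k31 k32 (by omega) (by omega)]

end StiffL

theorem stmt8_general (n : ℕ) (hn : 2 ≤ n) (k1 k2 k31 k32 : ℝ) :
    (stiffL n k1 k2 k31 k32).mulVec (fun i => (-1 : ℝ)^((i : ℕ))) =
        (-(2*k1 + 2*k2)) • (fun i : Fin (2*n) => (-1 : ℝ)^((i : ℕ))) ↔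
      (k31 = 2*k2 ∧ k32 = 2*k2) := by
  have hrow (i : Fin (2*n)) := StiffL.mulVec_alternating_apply n k1 k2 k31 k32 (by omega) i
  constructor
  · intro h
    have h0 := (hrow ⟨0, by omega⟩).symm.trans (congrFun h _)
    have hlast := (hrow ⟨2*n - 1, by omega⟩).symm.trans (congrFun h _)
    simp only [Pi.smul_apply, smul_eq_mul, if_true, pow_zero,
      if_neg (show 2*n - 1 ≠ 0 by omega)] at h0 hlast
    have := mul_right_cancel₀ (pow_ne_zero (2*n - 1) (by norm_num : (-1 : ℝ) ≠ 0)) hlast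
    constructor <;> linarith
  · rintro ⟨rfl, rfl⟩
    funext i
    rw [hrow]
    simp only [Pi.smul_apply, smul_eq_mul]
    split_ifs <;> ring

/-- The vector `u` with `u_{2j−1} = 1`, `u_{2j} = −1` is a band edge state at the
upper edge `ω² = 2k1 + 2k2` of the optical band iff both boundary springs equal `2k2`. -/
theorem stmt8 (n : ℕ) (hn : 2 ≤ n) (k1 k2 k31 k32 : ℝ)
    (hk1 : 0 < k1) (hk12 : k1 < k2) :
    (stiffL n k1 k2 k31 k32).mulVec (fun i => (-1 : ℝ)^((i : ℕ))) =
        (-(2*k1 + 2*k2)) • (fun i : Fin (2*n) => (-1 : ℝ)^((i : ℕ))) ↔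
      (k31 = 2*k2 ∧ k32 = 2*k2) :=
  stmt8_general n hn k1 k2 k31 k32
end

section
/- Let n ≥ 2 be an integer, 0 < k1 < k2, set c = −k2/(k2 − k1), k31 = 2k2, and define u ∈ ℝ^{2n} by u_{2j−1} = (−1)^{j−1}[1 + c − 2c(j−1)(k2−k1)/k2] and u_{2j} = (−1)^{j−1}[−1 + c + 2c(j−1)(k2−k1)/k2] for 1 ≤ j ≤ n. Then Lu = −2k1·u if and only if k32 = 2k1k2 / ((2n−1)(k2−k1) + k2). (Thus with k31 = 2k2, the chain has a band edge state at the upper edge ω² = 2k1 of the acoustic band exactly for this value of k32.) -/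
/-- The explicit candidate band edge state at the upper edge `ω² = 2k1` of the
acoustic band, with `c = −k2/(k2−k1)`:
`u_{2j−1} = (−1)^{j−1}[1 + c − 2c(j−1)(k2−k1)/k2]`,
`u_{2j} = (−1)^{j−1}[−1 + c + 2c(j−1)(k2−k1)/k2]` (1-based). -/
noncomputable def uAcUpper (n : ℕ) (k1 k2 : ℝ) : Fin (2*n) → ℝ := fun i =>
  (-1 : ℝ)^((i : ℕ)/2) *
    (if (i : ℕ) % 2 = 0 then
        1 + (-k2/(k2 - k1)) -
          2*(-k2/(k2 - k1))*(((i : ℕ)/2 : ℕ) : ℝ)*(k2 - k1)/k2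
      else
        -1 + (-k2/(k2 - k1)) +
          2*(-k2/(k2 - k1))*(((i : ℕ)/2 : ℕ) : ℝ)*(k2 - k1)/k2)

/-! With `c = -k2/(k2-k1)` one has `2c(k2-k1)/k2 = -2`, so the candidate vector is
`u_{2m} = (-1)^m (c + 2m + 1)`, `u_{2m+1} = (-1)^m (c - 2m - 1)` (0-based). Every row of
`(L + 2k1) u = 0` except the last one, the first row thanks to `k31 = 2k2`, then reduces to the
identity `c (k1 - k2) = k2`. The last row is linear in `k32`: it reads `k32 (c - (2n-1)) = 2 c k1`,
which after multiplying by `k2 - k1 ≠ 0` is the stated value of `k32`. -/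

open Matrix

theorem Fintype.sum_eq_add_add {ι M : Type*} [Fintype ι] [DecidableEq ι] [AddCommMonoid M]
    {f : ι → M} (a b c : ι) (hab : a ≠ b) (hac : a ≠ c) (hbc : b ≠ c)
    (h : ∀ x, x ≠ a → x ≠ b → x ≠ c → f x = 0) : ∑ x, f x = f a + f b + f c := by
  rw [← Finset.sum_subset (Finset.subset_univ {a, b, c}) fun x _ hx => by
    simp only [Finset.mem_insert, Finset.mem_singleton, not_or] at hx
    exact h x hx.1 hx.2.1 hx.2.2]
  rw [Finset.sum_insert (by simp [hab, hac]), Finset.sum_pair hbc, add_assoc]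

section Rows

variable {n : ℕ} {k1 k2 k31 k32 : ℝ} (Q : ℕ → ℝ)

theorem stiffL_apply_eq_zero_of_far {i j : Fin (2 * n)}
    (h : (i : ℕ) + 1 < j ∨ (j : ℕ) + 1 < i) :
    stiffL n k1 k2 k31 k32 i j = 0 := by
  simp only [stiffL, of_apply]
  split_ifs <;> first | rfl | omega

theorem stiffL_mulVec_apply_zero (hn : 0 < n) :
    (stiffL n k1 k2 k31 k32 *ᵥ fun j => Q j) ⟨0, by omega⟩ =
      -(k31 + k1) * Q 0 + k1 * Q 1 := by
  rw [mulVec, dotProduct,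
    Fintype.sum_eq_add ⟨0, by omega⟩ ⟨1, by omega⟩ (by simp [Fin.ext_iff])]
  · simp [stiffL]
  · rintro j ⟨h0, h1⟩
    rw [stiffL_apply_eq_zero_of_far, zero_mul]
    simp only [ne_eq, Fin.ext_iff] at h0 h1 ⊢
    omega

theorem stiffL_mulVec_apply_odd (m : ℕ) (h : 2 * m + 2 < 2 * n) :
    (stiffL n k1 k2 k31 k32 *ᵥ fun j => Q j) ⟨2 * m + 1, by omega⟩ =
      k1 * Q (2 * m) - (k1 + k2) * Q (2 * m + 1) + k2 * Q (2 * m + 2) := by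
  rw [mulVec, dotProduct, Fintype.sum_eq_add_add ⟨2 * m, by omega⟩ ⟨2 * m + 1, by omega⟩
    ⟨2 * m + 2, h⟩ (by simp [Fin.ext_iff]) (by simp [Fin.ext_iff]) (by simp [Fin.ext_iff])]
  · simp only [stiffL, of_apply]
    split_ifs <;> first | contradiction | omega | ring
  · intro j h0 h1 h2
    rw [stiffL_apply_eq_zero_of_far, zero_mul]
    simp only [ne_eq, Fin.ext_iff] at h0 h1 h2 ⊢
    omega

theorem stiffL_mulVec_apply_even (m : ℕ) (h : 2 * m + 3 < 2 * n) :
    (stiffL n k1 k2 k31 k32 *ᵥ fun j => Q j) ⟨2 * m + 2, by omega⟩ =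
      k2 * Q (2 * m + 1) - (k1 + k2) * Q (2 * m + 2) + k1 * Q (2 * m + 3) := by
  rw [mulVec, dotProduct, Fintype.sum_eq_add_add ⟨2 * m + 1, by omega⟩ ⟨2 * m + 2, by omega⟩
    ⟨2 * m + 3, h⟩ (by simp [Fin.ext_iff]) (by simp [Fin.ext_iff]) (by simp [Fin.ext_iff])]
  · simp only [stiffL, of_apply]
    split_ifs <;> first | contradiction | omega | ring
  · intro j h0 h1 h2
    rw [stiffL_apply_eq_zero_of_far, zero_mul]
    simp only [ne_eq, Fin.ext_iff] at h0 h1 h2 ⊢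
    omega

theorem stiffL_mulVec_apply_last (m : ℕ) (h : 2 * m + 2 = 2 * n) :
    (stiffL n k1 k2 k31 k32 *ᵥ fun j => Q j) ⟨2 * m + 1, by omega⟩ =
      k1 * Q (2 * m) - (k1 + k32) * Q (2 * m + 1) := by
  rw [mulVec, dotProduct,
    Fintype.sum_eq_add ⟨2 * m, by omega⟩ ⟨2 * m + 1, by omega⟩ (by simp [Fin.ext_iff])]
  · simp only [stiffL, of_apply]
    split_ifs <;> first | contradiction | omega | ring
  · rintro j ⟨h0, h1⟩
    rw [stiffL_apply_eq_zero_of_far, zero_mul]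
    simp only [ne_eq, Fin.ext_iff] at h0 h1 ⊢
    omega

end Rows

def edgeMode (c : ℝ) (i : ℕ) : ℝ :=
  (-1) ^ (i / 2) * if i % 2 = 0 then c + (2 * (i / 2) + 1 : ℕ) else c - (2 * (i / 2) + 1 : ℕ)

theorem edgeMode_two_mul (c : ℝ) (m : ℕ) :
    edgeMode c (2 * m) = (-1) ^ m * (c + (2 * m + 1)) := by
  simp [edgeMode]

theorem edgeMode_two_mul_add_one (c : ℝ) (m : ℕ) :
    edgeMode c (2 * m + 1) = (-1) ^ m * (c - (2 * m + 1)) := by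
  simp [edgeMode, Nat.add_div]

theorem uAcUpper_eq_edgeMode {n : ℕ} {k1 k2 : ℝ} (hk12 : k1 ≠ k2) (hk2 : k2 ≠ 0) :
    uAcUpper n k1 k2 = fun i : Fin (2 * n) => edgeMode (-k2 / (k2 - k1)) i := by
  have hsub : k2 - k1 ≠ 0 := sub_ne_zero.mpr hk12.symm
  ext i
  simp only [uAcUpper, edgeMode]
  congr 1
  split_ifs <;> push_cast <;> field_simp <;> ring

section EdgeMode

variable {n : ℕ} {k1 k2 k32 c : ℝ} (hc : c * (k1 - k2) = k2)
include hc

theorem stiffL_mulVec_edgeMode_apply_of_ne_last (i : Fin (2 * n)) (hi : (i : ℕ) ≠ 2 * n - 1) :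
    (stiffL n k1 k2 (2 * k2) k32 *ᵥ fun j => edgeMode c j) i = -(2 * k1) * edgeMode c i := by
  obtain ⟨i, hi2n⟩ := i
  simp only at hi
  obtain ⟨m, rfl | rfl⟩ := Nat.even_or_odd' i
  · cases m with
    | zero =>
      rw [stiffL_mulVec_apply_zero _ (by omega)]
      simp only [edgeMode, Nat.reduceDiv, Nat.reduceMod, Nat.reduceMul, Nat.reduceAdd, one_ne_zero,
        ↓reduceIte, pow_zero, Nat.cast_one]
      linear_combination 2 * hc
    | succ m =>
      rw [show (⟨2 * (m + 1), hi2n⟩ : Fin (2 * n)) = ⟨2 * m + 2, by omega⟩ from rfl,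
        stiffL_mulVec_apply_even _ m (by omega)]
      simp only [show 2 * m + 2 = 2 * (m + 1) by ring, show 2 * m + 3 = 2 * (m + 1) + 1 by ring,
        edgeMode_two_mul, edgeMode_two_mul_add_one]
      push_cast
      linear_combination -2 * (-1) ^ m * hc
  · rw [stiffL_mulVec_apply_odd _ m (by omega)]
    simp only [show 2 * m + 2 = 2 * (m + 1) by ring, edgeMode_two_mul, edgeMode_two_mul_add_one]
    push_cast
    linear_combination 2 * (-1) ^ m * hc

omit hc in
theorem stiffL_mulVec_edgeMode_apply_last_iff (m : ℕ) (h : 2 * m + 2 = 2 * n) :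
    (stiffL n k1 k2 (2 * k2) k32 *ᵥ fun j => edgeMode c j) ⟨2 * m + 1, by omega⟩ =
        -(2 * k1) * edgeMode c (2 * m + 1) ↔
      k32 * (c - (2 * m + 1)) = 2 * c * k1 := by
  rw [stiffL_mulVec_apply_last _ m h, edgeMode_two_mul, edgeMode_two_mul_add_one, ← sub_eq_zero,
    ← sub_eq_zero (a := k32 * _)]
  have hsign : ((-1 : ℝ) ^ m) ≠ 0 := pow_ne_zero _ (by norm_num)
  constructor
  · intro H
    refine (mul_eq_zero.mp ?_).resolve_left hsign
    linear_combination -H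
  · intro H
    linear_combination -(-1) ^ m * H

theorem stiffL_mulVec_edgeMode_eq_iff (hn : 0 < n) :
    (stiffL n k1 k2 (2 * k2) k32 *ᵥ fun j => edgeMode c j) =
        -(2 * k1) • (fun j : Fin (2 * n) => edgeMode c j) ↔
      k32 * (c - (2 * n - 1)) = 2 * c * k1 := by
  obtain ⟨m, rfl⟩ : ∃ m, n = m + 1 := ⟨n - 1, by omega⟩
  rw [show 2 * ((m + 1 : ℕ) : ℝ) - 1 = 2 * m + 1 by push_cast; ring,
    ← stiffL_mulVec_edgeMode_apply_last_iff (n := m + 1) m rfl, funext_iff]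
  refine ⟨fun H => H _, fun H i => ?_⟩
  by_cases hi : (i : ℕ) = 2 * (m + 1) - 1
  · obtain ⟨i, hi2n⟩ := i
    obtain rfl : i = 2 * m + 1 := by simp only at hi; omega
    exact H
  · exact stiffL_mulVec_edgeMode_apply_of_ne_last hc i hi

end EdgeMode

/-- With `k31 = 2k2`, the vector `uAcUpper` is a band edge state at the upper edge
`ω² = 2k1` of the acoustic band iff `k32 = 2k1k2/((2n−1)(k2−k1) + k2)`. -/
theorem stmt9 (n : ℕ) (hn : 2 ≤ n) (k1 k2 k32 : ℝ)
    (hk1 : 0 < k1) (hk12 : k1 < k2) :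
    (stiffL n k1 k2 (2*k2) k32).mulVec (uAcUpper n k1 k2) =
        (-(2*k1)) • (uAcUpper n k1 k2) ↔
      k32 = 2*k1*k2 / ((2*(n : ℝ) - 1)*(k2 - k1) + k2) := by
  have hsub : k2 - k1 ≠ 0 := sub_ne_zero.mpr hk12.ne'
  have hk2 : k2 ≠ 0 := (hk1.trans hk12).ne'
  have hn' : (2 : ℝ) ≤ n := by exact_mod_cast hn
  set c := -k2 / (k2 - k1) with hc_def
  have hc : c * (k1 - k2) = k2 := by rw [hc_def]; field_simp; ring
  have hD : (2 * (n : ℝ) - 1) * (k2 - k1) + k2 = -(k2 - k1) * (c - (2 * n - 1)) := by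
    rw [hc_def]; field_simp; ring
  have hnum : 2 * k1 * k2 = -(k2 - k1) * (2 * c * k1) := by rw [hc_def]; field_simp
  rw [uAcUpper_eq_edgeMode hk12.ne hk2, stiffL_mulVec_edgeMode_eq_iff hc (by omega),
    eq_div_iff (by nlinarith), hD, hnum, mul_left_comm, mul_right_inj' (neg_ne_zero.mpr hsub)]
end

section
/- Let 0 < k1 < k2 and n ≥ 2 be an integer, and suppose k31 = k2. Define u ∈ ℝ^{2n} by u_{2j−1} = (−k1/k2)^{j−1} and u_{2j} = 0 for 1 ≤ j ≤ n. Then (Lu)_j = −(k1 + k2)·u_j holds for every 1 ≤ j ≤ 2n−1, but for every real value of k32 one has (Lu)_{2n} ≠ −(k1 + k2)·u_{2n}. Consequently, the genuine left edge state with decay rate a = −k1/k2 (the state with c2 = 0) exists only in the semi-infinite chain and never in a finite chain with finite boundary spring k32. -/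
/-- The genuine left edge state with decay rate `a = −k1/k2`:
`u_{2j−1} = (−k1/k2)^{j−1}`, `u_{2j} = 0` (1-based). -/
noncomputable def uLeftEdge (n : ℕ) (k1 k2 : ℝ) : Fin (2*n) → ℝ := fun i =>
  if (i : ℕ) % 2 = 0 then (-k1/k2)^((i : ℕ)/2) else 0

/-!
With `a = -k1/k2`, the vector `u` vanishes on the odd (0-based) sites and is geometric on the
even ones. An even row of `L` meets the support of `u` only on the diagonal, and `k31 = k2` makes
the first diagonal entry equal to the bulk one `-(k1 + k2)`. An odd interior row gives
`k1 a^m + k2 a^(m+1) = 0`, which is where the decay rate `-k1/k2` comes from. The last row has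
no right neighbour to cancel against, so it gives `k1 a^(n-1) ≠ 0` while `u_{2n} = 0`, whatever
`k32` is.
-/

open scoped Matrix

namespace stiffL

variable {n : ℕ} {k1 k2 k31 k32 : ℝ}

theorem apply_of_not_adjacent {i j : Fin (2*n)} (hij : (i : ℕ) ≠ j) (hsucc : (i : ℕ) + 1 ≠ j)
    (hpred : (j : ℕ) + 1 ≠ i) : stiffL n k1 k2 k31 k32 i j = 0 := by
  simp [stiffL, hij, hsucc, hpred]

theorem mulVec_apply_of_odd (q : Fin (2*n) → ℝ) (i : Fin (2*n)) (hodd : (i : ℕ) % 2 = 1)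
    (hlt : (i : ℕ) + 1 < 2*n) :
    (stiffL n k1 k2 k31 k32 *ᵥ q) i =
      k1 * q ⟨i - 1, by omega⟩ - (k1 + k2) * q i + k2 * q ⟨i + 1, hlt⟩ := by
  set p : Fin (2*n) := ⟨i - 1, by omega⟩
  set s : Fin (2*n) := ⟨i + 1, hlt⟩
  have hps : p ≠ s := Fin.ne_of_val_ne (by dsimp [p, s]; omega)
  have hpi : p ≠ i := Fin.ne_of_val_ne (by dsimp [p]; omega)
  have hsi : s ≠ i := Fin.ne_of_val_ne (by dsimp [s]; omega)
  rw [Matrix.mulVec, dotProduct, ← Finset.sum_subset (Finset.subset_univ {p, i, s}),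
    Finset.sum_insert (by simp [hpi, hps]), Finset.sum_pair hsi.symm]
  · simp only [stiffL, Matrix.of_apply, p, s]
    split_ifs <;> first | omega | ring
  · intro j _ hj
    simp only [Finset.mem_insert, Finset.mem_singleton, Fin.ext_iff, p, s] at hj
    rw [apply_of_not_adjacent (by omega) (by omega) (by omega), zero_mul]

theorem mulVec_apply_last (q : Fin (2*n) → ℝ) (i : Fin (2*n)) (hpos : 0 < (i : ℕ))
    (hlast : (i : ℕ) + 1 = 2*n) :
    (stiffL n k1 k2 k31 k32 *ᵥ q) i = k1 * q ⟨i - 1, by omega⟩ - (k1 + k32) * q i := by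
  set p : Fin (2*n) := ⟨i - 1, by omega⟩
  have hpi : p ≠ i := Fin.ne_of_val_ne (by dsimp [p]; omega)
  rw [Matrix.mulVec, dotProduct, ← Finset.sum_subset (Finset.subset_univ {p, i}),
    Finset.sum_pair hpi]
  · simp only [stiffL, Matrix.of_apply, p]
    split_ifs <;> first | omega | ring
  · intro j _ hj
    simp only [Finset.mem_insert, Finset.mem_singleton, Fin.ext_iff, p] at hj
    rw [apply_of_not_adjacent (by omega) (by omega) (by omega), zero_mul]

end stiffL

namespace uLeftEdge

variable {n : ℕ} {k1 k2 : ℝ}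

theorem apply_of_even {i : Fin (2*n)} (h : (i : ℕ) % 2 = 0) :
    uLeftEdge n k1 k2 i = (-k1/k2) ^ ((i : ℕ) / 2) := if_pos h

theorem apply_of_odd {i : Fin (2*n)} (h : (i : ℕ) % 2 = 1) : uLeftEdge n k1 k2 i = 0 :=
  if_neg (by omega)

theorem stiffL_mulVec_apply_of_even (k32 : ℝ) {i : Fin (2*n)} (heven : (i : ℕ) % 2 = 0) :
    (stiffL n k1 k2 k2 k32 *ᵥ uLeftEdge n k1 k2) i = -(k1 + k2) * uLeftEdge n k1 k2 i := by
  rw [Matrix.mulVec, dotProduct, Finset.sum_eq_single_of_mem i (Finset.mem_univ i)]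
  · simp only [stiffL, Matrix.of_apply]
    split_ifs <;> first | omega | ring
  · intro j _ hji
    have hij : (i : ℕ) ≠ j := fun h => hji (Fin.ext h.symm)
    by_cases hadj : (i : ℕ) + 1 = j ∨ (j : ℕ) + 1 = i
    · rw [apply_of_odd (by omega), mul_zero]
    · rw [stiffL.apply_of_not_adjacent hij (by omega) (by omega), zero_mul]

theorem stiffL_mulVec_apply_of_odd (k31 k32 : ℝ) (hk2 : k2 ≠ 0) {i : Fin (2*n)}
    (hodd : (i : ℕ) % 2 = 1) (hlt : (i : ℕ) + 1 < 2*n) :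
    (stiffL n k1 k2 k31 k32 *ᵥ uLeftEdge n k1 k2) i = 0 := by
  rw [stiffL.mulVec_apply_of_odd _ i hodd hlt, apply_of_odd hodd, apply_of_even (by simp; omega),
    apply_of_even (by simp; omega)]
  have hdiv : ((i : ℕ) + 1) / 2 = ((i : ℕ) - 1) / 2 + 1 := by omega
  rw [hdiv, pow_succ]
  field_simp
  ring

theorem stiffL_mulVec_apply_last (k31 k32 : ℝ) {i : Fin (2*n)} (hpos : 0 < (i : ℕ))
    (hlast : (i : ℕ) + 1 = 2*n) :
    (stiffL n k1 k2 k31 k32 *ᵥ uLeftEdge n k1 k2) i = k1 * (-k1/k2) ^ (n - 1) := by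
  have hdiv : ((i : ℕ) - 1) / 2 = n - 1 := by omega
  rw [stiffL.mulVec_apply_last _ i hpos hlast, apply_of_odd (i := i) (by omega),
    apply_of_even (by dsimp; omega), mul_zero, sub_zero]
  simp only [hdiv]

end uLeftEdge

/-- With `k31 = k2`, the genuine left edge state satisfies the eigenvalue equation
`(Lu)_j = −(k1+k2) u_j` at all rows except the last, where it fails for every real
value of the boundary spring `k32`: this edge state exists only in the semi-infinite
chain, never in a finite chain. -/
theorem stmt10 (n : ℕ) (hn : 2 ≤ n) (k1 k2 : ℝ) (hk1 : 0 < k1) (hk12 : k1 < k2) :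
    ∀ k32 : ℝ,
      (∀ i : Fin (2*n), (i : ℕ) < 2*n - 1 →
        (stiffL n k1 k2 k2 k32).mulVec (uLeftEdge n k1 k2) i =
          (-(k1 + k2)) * uLeftEdge n k1 k2 i) ∧
      (stiffL n k1 k2 k2 k32).mulVec (uLeftEdge n k1 k2) ⟨2*n - 1, by omega⟩ ≠
        (-(k1 + k2)) * uLeftEdge n k1 k2 ⟨2*n - 1, by omega⟩ := by
  intro k32
  have hk2 : k2 ≠ 0 := (hk1.trans hk12).ne'
  refine ⟨fun i hi => ?_, ?_⟩
  · rcases Nat.mod_two_eq_zero_or_one i with heven | hodd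
    · exact uLeftEdge.stiffL_mulVec_apply_of_even k32 heven
    · rw [uLeftEdge.stiffL_mulVec_apply_of_odd k2 k32 hk2 hodd (by omega),
        uLeftEdge.apply_of_odd hodd, mul_zero]
  · rw [uLeftEdge.stiffL_mulVec_apply_last k2 k32 (by simp; omega) (by simp; omega),
      uLeftEdge.apply_of_odd (by simp; omega), mul_zero]
    exact mul_ne_zero hk1.ne' (pow_ne_zero _ (div_ne_zero (neg_ne_zero.mpr hk1.ne') hk2))
end

section
/- Let n ≥ 1 be an integer, let α, β, θ ∈ ℝ with sin θ ≠ 0, let σ ∈ {−1, 1}, and let u ∈ ℝ^{2n} be defined by u_{2j−1} = cos(α + β + (j−1)θ) and u_{2j} = σ·cos(−α + β + (j−1)θ) for 1 ≤ j ≤ n. Then | ‖u‖² − n | ≤ 2 / sin²θ, where ‖u‖² = Σ_{j=1}^{2n} u_j². -/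
/-!
Pairing the two atoms of each unit cell and using `cos² x = (1 + cos 2x)/2`, the squared norm
is `n` plus half of two sums `∑_{j<n} cos (c + 2jθ)`. Multiplied by `2 sin θ`, such a sum
telescopes to a difference of two sines, so each is at most `1/|sin θ| ≤ 1/sin² θ` in size.
-/

open Finset Real

theorem Finset.sum_range_two_mul {M : Type*} [AddCommMonoid M] (f : ℕ → M) (n : ℕ) :
    ∑ i ∈ range (2 * n), f i = ∑ j ∈ range n, (f (2 * j) + f (2 * j + 1)) := by
  induction n with
  | zero => simp
  | succ n ih =>
    rw [Nat.mul_succ, sum_range_succ, sum_range_succ, sum_range_succ, ih, add_assoc]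

theorem Real.two_mul_sin_mul_sum_range_cos (c θ : ℝ) (n : ℕ) :
    2 * sin θ * ∑ j ∈ range n, cos (c + 2 * j * θ) = sin (c + (2 * n - 1) * θ) - sin (c - θ) := by
  have step (j : ℕ) : sin (c + (2 * (j + 1 : ℕ) - 1) * θ) - sin (c + (2 * j - 1) * θ)
      = 2 * sin θ * cos (c + 2 * j * θ) := by
    have h₁ : c + (2 * (j + 1 : ℕ) - 1) * θ = c + 2 * j * θ + θ := by push_cast; ring
    have h₂ : c + (2 * j - 1) * θ = c + 2 * j * θ - θ := by ring
    rw [h₁, h₂, sin_add, sin_sub]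
    ring
  rw [mul_sum, ← sum_congr rfl fun j _ => step j, sum_range_sub (fun j : ℕ => sin (c + (2 * j - 1) * θ))]
  simp [sub_eq_add_neg]

theorem Real.abs_sum_range_cos_le (c θ : ℝ) (n : ℕ) (hθ : sin θ ≠ 0) :
    |∑ j ∈ range n, cos (c + 2 * j * θ)| ≤ 1 / |sin θ| := by
  have hs : 0 < |sin θ| := abs_pos.mpr hθ
  have key : |2 * sin θ * ∑ j ∈ range n, cos (c + 2 * j * θ)| ≤ 2 := by
    rw [two_mul_sin_mul_sum_range_cos]
    calc _ ≤ |sin (c + (2 * n - 1) * θ)| + |sin (c - θ)| := abs_sub _ _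
      _ ≤ 2 := by linarith [abs_sin_le_one (c + (2 * n - 1) * θ), abs_sin_le_one (c - θ)]
  rw [abs_mul, abs_mul, abs_two] at key
  rw [le_div_iff₀ hs]
  linarith

theorem Real.cos_sq_add_cos_sq (x y : ℝ) :
    cos x ^ 2 + cos y ^ 2 = 1 + (cos (2 * x) + cos (2 * y)) / 2 := by
  rw [cos_sq x, cos_sq y]
  ring

theorem Real.sum_cell_sq_eq (n : ℕ) (a b θ σ : ℝ) (hσ : σ ^ 2 = 1) :
    ∑ i : Fin (2 * n), (if (i : ℕ) % 2 = 0 then cos (a + (((i : ℕ) / 2 : ℕ) : ℝ) * θ)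
        else σ * cos (b + (((i : ℕ) / 2 : ℕ) : ℝ) * θ)) ^ 2
      = n + (∑ j ∈ range n, cos (2 * a + 2 * j * θ) + ∑ j ∈ range n, cos (2 * b + 2 * j * θ)) / 2 := by
  rw [Fin.sum_univ_eq_sum_range (fun i => (if i % 2 = 0 then cos (a + ((i / 2 : ℕ) : ℝ) * θ)
    else σ * cos (b + ((i / 2 : ℕ) : ℝ) * θ)) ^ 2), sum_range_two_mul]
  have cell (j : ℕ) : (2 * j) / 2 = j ∧ (2 * j + 1) / 2 = j ∧ (2 * j + 1) % 2 ≠ 0 := by omega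
  simp only [cell, Nat.mul_mod_right, if_true, if_false, mul_pow, hσ, one_mul,
    cos_sq_add_cos_sq, sum_add_distrib, sum_const, card_range, nsmul_eq_mul, mul_one, ← sum_div]
  simp only [mul_add, mul_assoc]

theorem stmt11_general (n : ℕ) (α β θ : ℝ) (hθ : Real.sin θ ≠ 0)
    (σ : ℝ) (hσ : σ = 1 ∨ σ = -1) :
    |(∑ i : Fin (2*n),
        (if (i : ℕ) % 2 = 0 then
            Real.cos (α + β + (((i : ℕ)/2 : ℕ) : ℝ) * θ)
          else
            σ * Real.cos (-α + β + (((i : ℕ)/2 : ℕ) : ℝ) * θ))^2)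
      - (n : ℝ)| ≤ 2 / (Real.sin θ)^2 := by
  have hσ2 : σ ^ 2 = 1 := by rcases hσ with rfl | rfl <;> norm_num
  rw [sum_cell_sq_eq n (α + β) (-α + β) θ σ hσ2, add_sub_cancel_left, abs_div, abs_two]
  set A := ∑ j ∈ range n, cos (2 * (α + β) + 2 * j * θ)
  set B := ∑ j ∈ range n, cos (2 * (-α + β) + 2 * j * θ)
  have hs : 0 < |sin θ| := abs_pos.mpr hθ
  calc |A + B| / 2 ≤ (|A| + |B|) / 2 := by gcongr; exact abs_add_le A B
    _ ≤ 1 / |sin θ| := by linarith [abs_sum_range_cos_le (2 * (α + β)) θ n hθ,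
        abs_sum_range_cos_le (2 * (-α + β)) θ n hθ]
    _ ≤ 2 / sin θ ^ 2 := by
      rw [← sq_abs, div_le_div_iff₀ hs (by positivity)]
      nlinarith [abs_sin_le_one θ]

/-- In-band eigenstates of the diatomic chain, given (1-based) by
`u_{2j−1} = cos(α + β + (j−1)θ)`, `u_{2j} = σ·cos(−α + β + (j−1)θ)` with
`sin θ ≠ 0` and `σ = ±1`, have squared norm within `2/sin²θ` of `n`. -/
theorem stmt11 (n : ℕ) (hn : 1 ≤ n) (α β θ : ℝ) (hθ : Real.sin θ ≠ 0)
    (σ : ℝ) (hσ : σ = 1 ∨ σ = -1) :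
    |(∑ i : Fin (2*n),
        (if (i : ℕ) % 2 = 0 then
            Real.cos (α + β + (((i : ℕ)/2 : ℕ) : ℝ) * θ)
          else
            σ * Real.cos (-α + β + (((i : ℕ)/2 : ℕ) : ℝ) * θ))^2)
      - (n : ℝ)| ≤ 2 / (Real.sin θ)^2 :=
  stmt11_general n α β θ hθ σ hσ
end

section
/- Let L be a real symmetric N×N matrix, ω₀ > 0, and u₀ ∈ ℝ^N a unit vector with Lu₀ = −ω₀² u₀. Assume −ω₀² is a simple eigenvalue of L and that, for every integer k ≥ 0 with k ≠ 1, the number −k²ω₀² is not an eigenvalue of L. Let (ω_m)_{m≥0} be real numbers (with ω₀ as given) and let (Q_m)_{m≥0} be 2π-periodic ℝ^N-valued functions, each of the form Q_m(τ) = Σ_{k≥1} a_{m,k}·2cos(kτ) with only finitely many nonzero coefficients a_{m,k} ∈ ℝ^N, with Q₀(τ) = 2cos(τ)·u₀ and with (Q_m, Q₀) = 0 for every m ≥ 1. Suppose that for every m ≥ 1 the order-(m+1) equation Σ_{r+s+t=m, r,s,t≥0} ω_r ω_s Q̈_t(τ) = L Q_m(τ) + Σ_{a+b+c=m−2, a,b,c≥0}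 Q_a(τ)∘Q_b(τ)∘Q_c(τ) holds for all τ (the cubic sum being empty when m < 2). Then ω_{2m+1} = 0 and Q_{2m+1} ≡ 0 for every m ≥ 0. -/
/-!
Induction over the odd orders. If all odd-order terms below `n = 2m+1` vanish, then in every
composition `r + s + t = n` (and `a + b + c = n - 2`) some index is odd and smaller than `n`, so
the order-`n` equation collapses to `ω₀² Q̈ₙ + 2 ω₀ ωₙ Q̈₀ = L Qₙ`. Comparing cosine coefficients,
non-resonance kills every coefficient of `Qₙ` except the first one `v`, which satisfies
`(L + ω₀²) v = -2 ω₀ ωₙ u₀`. Pairing with `u₀` (Fredholm alternative for the symmetric `L`) gives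
`ωₙ = 0`; then `v` is a multiple of `u₀` by simplicity, and `(Qₙ, Q₀) = 0` forces `v = 0`.
-/

open Real Finset Matrix

theorem integral_cos_int_mul (n : ℤ) :
    ∫ τ in (0 : ℝ)..2 * π, cos (n * τ) = if n = 0 then 2 * π else 0 := by
  split_ifs with hn
  · simp [hn]
  · have hn' : (n : ℝ) ≠ 0 := by exact_mod_cast hn
    rw [intervalIntegral.integral_comp_mul_left (fun x => cos x) hn', integral_cos,
      show (n : ℝ) * (2 * π) = (2 * n : ℤ) * π by push_cast; ring, sin_int_mul_pi]
    simp

theorem integral_cos_nat_mul_mul_cos_nat_mul (k K : ℕ) :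
    ∫ τ in (0 : ℝ)..2 * π, cos (k * τ) * cos (K * τ)
      = if k = K then (if k = 0 then 2 * π else π) else 0 := by
  have hprod (τ : ℝ) : cos (k * τ) * cos (K * τ)
      = (cos (((k - K : ℤ) : ℝ) * τ) + cos (((k + K : ℤ) : ℝ) * τ)) / 2 := by
    push_cast
    rw [sub_mul, add_mul, cos_sub, cos_add]; ring
  simp_rw [hprod]
  rw [intervalIntegral.integral_div, intervalIntegral.integral_add
    ((by fun_prop : Continuous _).intervalIntegrable _ _)
    ((by fun_prop : Continuous _).intervalIntegrable _ _),
    integral_cos_int_mul, integral_cos_int_mul]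
  by_cases hkK : k = K
  · subst hkK
    by_cases hk : k = 0 <;> simp [hk]
  · have hsub : (k : ℤ) - K ≠ 0 := by omega
    have hadd : (k : ℤ) + K ≠ 0 := by omega
    simp [hkK, hsub, hadd]

section CosPoly

variable {E : Type*}

section Module

variable [AddCommGroup E] [Module ℝ E]

noncomputable def cosPoly (s : Finset ℕ) : (ℕ → E) →ₗ[ℝ] ℝ → E where
  toFun c τ := ∑ k ∈ s, (2 * cos (k * τ)) • c k
  map_add' c d := by ext τ; simp [smul_add, sum_add_distrib]
  map_smul' r c := by ext τ; simp [smul_sum, smul_comm r]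

@[simp]
theorem cosPoly_apply (s : Finset ℕ) (c : ℕ → E) (τ : ℝ) :
    cosPoly s c τ = ∑ k ∈ s, (2 * cos (k * τ)) • c k := rfl

theorem finsum_eq_cosPoly {s : Finset ℕ} {c : ℕ → E} (hc : ∀ k ∉ s, c k = 0) (τ : ℝ) :
    ∑ᶠ k : ℕ, (2 * cos (k * τ)) • c k = cosPoly s c τ :=
  finsum_eq_sum_of_support_subset _ fun k hk => by
    by_contra hks; exact hk (by simp [hc k hks])

theorem cosPoly_eq_of_forall_ne {s : Finset ℕ} {c : ℕ → E} {K : ℕ} (hK : K ∈ s)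
    (hc : ∀ k ∈ s, k ≠ K → c k = 0) (τ : ℝ) : cosPoly s c τ = (2 * cos (K * τ)) • c K :=
  sum_eq_single_of_mem K hK fun k hk hkK => by simp [hc k hk hkK]

theorem map_cosPoly {F : Type*} [AddCommGroup F] [Module ℝ F] (f : E →ₗ[ℝ] F) (s : Finset ℕ)
    (c : ℕ → E) (τ : ℝ) : f (cosPoly s c τ) = cosPoly s (fun k => f (c k)) τ := by
  simp [map_sum]

end Module

variable [NormedAddCommGroup E] [NormedSpace ℝ E]

theorem hasDerivAt_cosPoly (s : Finset ℕ) (c : ℕ → E) (τ : ℝ) :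
    HasDerivAt (cosPoly s c) (∑ k ∈ s, (-(2 * k * sin (k * τ))) • c k) τ := by
  refine HasDerivAt.fun_sum fun k _ => ?_
  have := ((((hasDerivAt_id' τ).const_mul (k : ℝ)).cos).const_mul 2).smul_const (c k)
  convert this using 2; ring

theorem deriv_deriv_cosPoly (s : Finset ℕ) (c : ℕ → E) :
    deriv (deriv (cosPoly s c)) = cosPoly s (fun k => (-(k : ℝ) ^ 2) • c k) := by
  have h1 : deriv (cosPoly s c) = fun τ => ∑ k ∈ s, (-(2 * k * sin (k * τ))) • c k :=
    funext fun τ => (hasDerivAt_cosPoly s c τ).deriv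
  funext τ
  rw [h1]
  refine (HasDerivAt.fun_sum fun k _ => ?_).deriv
  have := ((((hasDerivAt_id' τ).const_mul (k : ℝ)).sin).const_mul (-(2 * (k : ℝ)))).smul_const (c k)
  convert this using 1
  · ext x; simp only [neg_mul]
  · rw [smul_smul]; congr 1; ring

theorem eq_zero_of_cosPoly_eq_zero [CompleteSpace E] {s : Finset ℕ} {c : ℕ → E}
    (h : cosPoly s c = 0) {K : ℕ} (hK : K ∈ s) : c K = 0 := by
  have hint : ∫ τ in (0 : ℝ)..2 * π, cos (K * τ) • cosPoly s c τ
      = (2 * if K = 0 then 2 * π else π) • c K := by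
    simp only [cosPoly_apply, smul_sum, smul_smul]
    rw [intervalIntegral.integral_finsetSum fun k _ =>
      (by fun_prop : Continuous _).intervalIntegrable _ _]
    simp only [intervalIntegral.integral_smul_const]
    rw [sum_eq_single_of_mem K hK fun k _ hk => ?_]
    · simp_rw [show ∀ τ : ℝ, cos (K * τ) * (2 * cos (K * τ)) = 2 * (cos (K * τ) * cos (K * τ))
        from fun τ => by ring]
      rw [intervalIntegral.integral_const_mul, integral_cos_nat_mul_mul_cos_nat_mul, if_pos rfl]
    · simp_rw [show ∀ τ : ℝ, cos (K * τ) * (2 * cos (k * τ)) = 2 * (cos (k * τ) * cos (K * τ))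
        from fun τ => by ring]
      rw [intervalIntegral.integral_const_mul, integral_cos_nat_mul_mul_cos_nat_mul, if_neg hk,
        mul_zero, zero_smul]
  rw [h] at hint
  simp only [Pi.zero_apply, smul_zero, intervalIntegral.integral_zero] at hint
  refine (smul_eq_zero.mp hint.symm).resolve_left ?_
  have := pi_pos
  split_ifs <;> positivity

theorem eq_of_cosPoly_eq [CompleteSpace E] {s : Finset ℕ} {c d : ℕ → E}
    (h : cosPoly s c = cosPoly s d) {K : ℕ} (hK : K ∈ s) : c K = d K :=
  sub_eq_zero.mp <|
    eq_zero_of_cosPoly_eq_zero (s := s) (c := c - d) (by rw [map_sub, h, sub_self]) hK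

end CosPoly

theorem sum_range_sum_range_eq_of_forall_lt {M : Type*} [AddCommMonoid M] {n : ℕ} (hn : 0 < n)
    (g : ℕ → ℕ → M) (hg : ∀ r s, r + s ≤ n → r < n → s < n → 0 < r + s → g r s = 0) :
    ∑ r ∈ range (n + 1), ∑ s ∈ range (n + 1 - r), g r s = g 0 0 + g 0 n + g n 0 := by
  have hrow (r : ℕ) (hr : r ∈ range (n + 1)) (hr0 : r ≠ 0 ∧ r ≠ n) :
      ∑ s ∈ range (n + 1 - r), g r s = 0 :=
    sum_eq_zero fun s hs => by
      simp only [mem_range] at hr hs; exact hg r s (by omega) (by omega) (by omega) (by omega)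
  have hcol (s : ℕ) (hs : s ∈ range (n + 1)) (hs0 : s ≠ 0 ∧ s ≠ n) : g 0 s = 0 := by
    simp only [mem_range] at hs; exact hg 0 s (by omega) hn (by omega) (by omega)
  rw [sum_eq_add_of_mem 0 n (by simp) (by simp) hn.ne hrow, Nat.sub_zero,
    sum_eq_add_of_mem 0 n (by simp) (by simp) hn.ne hcol, Nat.add_sub_cancel_left, sum_range_one]

theorem sum_range_sum_range_smul_eq_of_odd {M : Type*} [AddCommMonoid M] [Module ℝ M] {n : ℕ}
    (hn : Odd n) (ω : ℕ → ℝ) (D : ℕ → M) (hω : ∀ p < n, Odd p → ω p = 0)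
    (hD : ∀ p < n, Odd p → D p = 0) :
    ∑ r ∈ range (n + 1), ∑ s ∈ range (n + 1 - r), (ω r * ω s) • D (n - r - s)
      = (ω 0 * ω 0) • D n + (2 * ω 0 * ω n) • D 0 := by
  rw [sum_range_sum_range_eq_of_forall_lt hn.pos _ fun r s hrs hr hs hpos => ?_]
  · simp only [Nat.sub_zero, Nat.sub_self]
    rw [add_assoc, ← add_smul]; congr 2; ring
  · rw [Nat.odd_iff] at hn
    rcases Nat.even_or_odd r with hre | hro
    · rcases Nat.even_or_odd s with hse | hso
      · rw [hD _ (by omega) (by rw [Nat.odd_iff]; rw [Nat.even_iff] at hre hse; omega), smul_zero]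
      · rw [hω s hs hso, mul_zero, zero_smul]
    · rw [hω r hr hro, zero_mul, zero_smul]

theorem sum_range_sum_range_mul_mul_eq_zero_of_odd {ι R : Type*} [NonUnitalNonAssocSemiring R]
    {n : ℕ} (hn : Odd n) (X : ℕ → ι → R) (hX : ∀ p < n, Odd p → X p = 0) :
    ∑ b ∈ range (n - 1), ∑ c ∈ range (n - 1 - b),
      (fun j => X b j * X c j * X (n - 2 - b - c) j) = 0 := by
  refine sum_eq_zero fun b hb => sum_eq_zero fun c hc => funext fun j => ?_
  simp only [mem_range] at hb hc
  rw [Nat.odd_iff] at hn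
  rcases Nat.even_or_odd b with hbe | hbo
  · rcases Nat.even_or_odd c with hce | hco
    · simp [hX (n - 2 - b - c) (by omega)
        (by rw [Nat.odd_iff]; rw [Nat.even_iff] at hbe hce; omega)]
    · simp [hX c (by omega) hco]
  · simp [hX b (by omega) hbo]

theorem Matrix.IsSymm.dotProduct_mulVec_sub_smul_eq_zero {R n : Type*} [CommRing R] [Fintype n]
    {L : Matrix n n R} (hL : L.IsSymm) {u : n → R} {μ : R} (hu : L *ᵥ u = μ • u) (v : n → R) :
    u ⬝ᵥ (L *ᵥ v - μ • v) = 0 := by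
  rw [dotProduct_sub, Matrix.dotProduct_mulVec, ← Matrix.mulVec_transpose, hL.eq, hu,
    dotProduct_smul, smul_dotProduct, sub_self]

theorem average_dotProduct_two_cos_smul {N : ℕ} (v w : Fin N → ℝ) :
    1 / (2 * π) * ∫ τ in (0 : ℝ)..2 * π, ((2 * cos τ) • v) ⬝ᵥ ((2 * cos τ) • w) = 2 * (v ⬝ᵥ w) := by
  simp_rw [dotProduct_smul, smul_dotProduct, smul_eq_mul,
    show ∀ τ, 2 * cos τ * (2 * cos τ * (v ⬝ᵥ w)) = (4 * (v ⬝ᵥ w)) * cos τ ^ 2 from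
      fun τ => by ring]
  rw [intervalIntegral.integral_const_mul, integral_cos_sq]
  simp only [cos_two_pi, sin_two_pi, sin_zero, mul_zero, sub_zero]
  field_simp [pi_ne_zero]
  ring

theorem odd_order_eq_zero {N : ℕ} {L : Matrix (Fin N) (Fin N) ℝ} (hL : L.IsSymm) {ω₀ : ℝ}
    (hω₀ : ω₀ ≠ 0) {u₀ : Fin N → ℝ} (hu₀ : u₀ ⬝ᵥ u₀ = 1) (hLu₀ : L *ᵥ u₀ = (-(ω₀ ^ 2)) • u₀)
    (hsimple : ∀ v, L *ᵥ v = (-(ω₀ ^ 2)) • v → ∃ t : ℝ, v = t • u₀)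
    (hres : ∀ k : ℕ, k ≠ 1 → ∀ v, L *ᵥ v = (-((k : ℝ) ^ 2 * ω₀ ^ 2)) • v → v = 0)
    {s : Finset ℕ} (hs : 1 ∈ s) {c c₀ : ℕ → Fin N → ℝ} (hc₀₁ : c₀ 1 = u₀)
    (hc₀ : ∀ k, k ≠ 1 → c₀ k = 0) {ν : ℝ}
    (hode : ∀ τ, (ω₀ * ω₀) • deriv (deriv (cosPoly s c)) τ
      + (2 * ω₀ * ν) • deriv (deriv (cosPoly s c₀)) τ = L *ᵥ cosPoly s c τ)
    (horth : 1 / (2 * π) * ∫ τ in (0 : ℝ)..2 * π, cosPoly s c τ ⬝ᵥ cosPoly s c₀ τ = 0) :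
    ν = 0 ∧ cosPoly s c = 0 := by
  have hcoeff : ∀ k ∈ s, L *ᵥ c k
      = (ω₀ * ω₀) • (-(k : ℝ) ^ 2) • c k + (2 * ω₀ * ν) • (-(k : ℝ) ^ 2) • c₀ k := by
    have h : cosPoly s (fun k => L *ᵥ c k) = cosPoly s
        ((ω₀ * ω₀) • (fun k : ℕ => (-(k : ℝ) ^ 2) • c k)
          + (2 * ω₀ * ν) • fun k : ℕ => (-(k : ℝ) ^ 2) • c₀ k) := by
      ext τ : 1
      rw [show cosPoly s (fun k => L *ᵥ c k) τ = L *ᵥ cosPoly s c τ from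
          (map_cosPoly L.mulVecLin s c τ).symm, ← hode, deriv_deriv_cosPoly,
        deriv_deriv_cosPoly, map_add, map_smul, map_smul]
      rfl
    exact fun k hk => eq_of_cosPoly_eq h hk
  have hc : ∀ k ∈ s, k ≠ 1 → c k = 0 := fun k hk hk1 =>
    hres k hk1 _ (by rw [hcoeff k hk, hc₀ k hk1]; module)
  have hc₁ : L *ᵥ c 1 - (-(ω₀ ^ 2)) • c 1 = (-(2 * ω₀ * ν)) • u₀ := by
    rw [hcoeff 1 hs, hc₀₁, Nat.cast_one]; module
  have hν : ν = 0 := by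
    have h := hL.dotProduct_mulVec_sub_smul_eq_zero hLu₀ (c 1)
    rw [hc₁, dotProduct_smul, hu₀, smul_eq_mul, mul_one, neg_eq_zero] at h
    simpa [hω₀] using h
  obtain ⟨t, ht⟩ := hsimple (c 1) (by rw [← sub_eq_zero, hc₁, hν]; simp)
  have ht0 : t = 0 := by
    simp_rw [cosPoly_eq_of_forall_ne hs hc, cosPoly_eq_of_forall_ne hs fun k _ => hc₀ k,
      Nat.cast_one, one_mul, ht, hc₀₁, average_dotProduct_two_cos_smul, smul_dotProduct,
      hu₀] at horth
    simpa using horth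
  refine ⟨hν, funext fun τ => ?_⟩
  rw [cosPoly_eq_of_forall_ne hs hc, ht, ht0]
  simp

theorem stmt12_general (N : ℕ) (L : Matrix (Fin N) (Fin N) ℝ) (hL : L.IsSymm)
    (ω0 : ℝ) (hω0 : 0 < ω0)
    (u0 : Fin N → ℝ) (hu0unit : ∑ j, (u0 j)^2 = 1)
    (hu0eig : L.mulVec u0 = (-(ω0^2)) • u0)
    (hsimple : ∀ v : Fin N → ℝ, L.mulVec v = (-(ω0^2)) • v → ∃ c : ℝ, v = c • u0)
    (hres : ∀ k : ℕ, k ≠ 1 → ∀ v : Fin N → ℝ,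
      L.mulVec v = (-((k : ℝ)^2 * ω0^2)) • v → v = 0)
    (ω : ℕ → ℝ) (hω : ω 0 = ω0)
    (a : ℕ → ℕ → Fin N → ℝ)
    (hafin : ∀ m, (Function.support (a m)).Finite)
    (Q : ℕ → ℝ → Fin N → ℝ)
    (hQform : ∀ m τ, Q m τ = ∑ᶠ k : ℕ, (2 * Real.cos ((k : ℝ) * τ)) • a m k)
    (haQ0 : a 0 1 = u0 ∧ ∀ k : ℕ, k ≠ 1 → a 0 k = 0)
    (horth : ∀ m, 1 ≤ m →
      (1/(2*Real.pi)) * ∫ τ in (0 : ℝ)..(2*Real.pi), ∑ j, Q m τ j * Q 0 τ j = 0)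
    (heq : ∀ m, 1 ≤ m → ∀ τ : ℝ,
      (∑ r ∈ Finset.range (m+1), ∑ s ∈ Finset.range (m+1-r),
          (ω r * ω s) • deriv (deriv (Q (m - r - s))) τ)
        = L.mulVec (Q m τ) +
          ∑ b ∈ Finset.range (m-1), ∑ c ∈ Finset.range (m-1-b),
            (fun j => Q b τ j * Q c τ j * Q (m-2-b-c) τ j)) :
    ∀ m : ℕ, ω (2*m+1) = 0 ∧ ∀ τ : ℝ, Q (2*m+1) τ = 0 := by
  obtain ⟨ha01, ha0k⟩ := haQ0
  have hQ (m : ℕ) {s : Finset ℕ} (hs : ∀ k ∉ s, a m k = 0) : Q m = cosPoly s (a m) :=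
    funext fun τ => (hQform m τ).trans (finsum_eq_cosPoly hs τ)
  have hstep (n : ℕ) (hn : Odd n) (hvan : ∀ p < n, Odd p → ω p = 0 ∧ Q p = 0) :
      ω n = 0 ∧ Q n = 0 := by
    have hode (τ : ℝ) : (ω0 * ω0) • deriv (deriv (Q n)) τ
        + (2 * ω0 * ω n) • deriv (deriv (Q 0)) τ = L *ᵥ Q n τ := by
      have h := heq n hn.pos τ
      rwa [sum_range_sum_range_smul_eq_of_odd hn ω (fun t => deriv (deriv (Q t)) τ)
          (fun p hp hpo => (hvan p hp hpo).1) (fun p hp hpo => by simp [(hvan p hp hpo).2]),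
        sum_range_sum_range_mul_mul_eq_zero_of_odd hn (fun t => Q t τ)
          (fun p hp hpo => by simp [(hvan p hp hpo).2]), add_zero, hω] at h
    set s := insert 1 (hafin n).toFinset
    have hQn : Q n = cosPoly s (a n) := hQ n fun k hk => by
      by_contra h; exact hk (mem_insert_of_mem ((hafin n).mem_toFinset.mpr h))
    have hQ0 : Q 0 = cosPoly s (a 0) := hQ 0 fun k hk =>
      ha0k k fun h => hk (h ▸ mem_insert_self 1 _)
    have horthn := horth n hn.pos
    rw [hQn, hQ0] at hode horthn
    rw [hQn]
    exact odd_order_eq_zero hL hω0.ne' (by simpa [dotProduct, sq] using hu0unit)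
      hu0eig hsimple hres (mem_insert_self 1 _) ha01 ha0k hode horthn
  intro m
  induction m using Nat.strong_induction_on with
  | _ m IH =>
  refine (hstep _ (odd_two_mul_add_one m) ?_).imp_right congrFun
  rintro p hp ⟨j, rfl⟩
  exact ⟨(IH j (by omega)).1, funext (IH j (by omega)).2⟩

/-- In the formal power-series expansion `Q = ε Q₀ + ε² Q₁ + ⋯`, `ω = ω₀ + ε ω₁ + ⋯`
of time-periodic solutions of `ω² Q″ = L Q + Q∘Q∘Q` around a simple, non-resonant
linear mode `u₀` with frequency `ω₀`, all odd-order terms vanish: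
`ω_{2m+1} = 0` and `Q_{2m+1} ≡ 0` for every `m ≥ 0`. -/
theorem stmt12 (N : ℕ) (L : Matrix (Fin N) (Fin N) ℝ) (hL : L.IsSymm)
    (ω0 : ℝ) (hω0 : 0 < ω0)
    (u0 : Fin N → ℝ) (hu0unit : ∑ j, (u0 j)^2 = 1)
    (hu0eig : L.mulVec u0 = (-(ω0^2)) • u0)
    (hsimple : ∀ v : Fin N → ℝ, L.mulVec v = (-(ω0^2)) • v → ∃ c : ℝ, v = c • u0)
    (hres : ∀ k : ℕ, k ≠ 1 → ∀ v : Fin N → ℝ,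
      L.mulVec v = (-((k : ℝ)^2 * ω0^2)) • v → v = 0)
    (ω : ℕ → ℝ) (hω : ω 0 = ω0)
    (a : ℕ → ℕ → Fin N → ℝ)
    (hafin : ∀ m, (Function.support (a m)).Finite)
    (ha0 : ∀ m, a m 0 = 0)
    (Q : ℕ → ℝ → Fin N → ℝ)
    (hQform : ∀ m τ, Q m τ = ∑ᶠ k : ℕ, (2 * Real.cos ((k : ℝ) * τ)) • a m k)
    (haQ0 : a 0 1 = u0 ∧ ∀ k : ℕ, k ≠ 1 → a 0 k = 0)
    (horth : ∀ m, 1 ≤ m →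
      (1/(2*Real.pi)) * ∫ τ in (0 : ℝ)..(2*Real.pi), ∑ j, Q m τ j * Q 0 τ j = 0)
    (heq : ∀ m, 1 ≤ m → ∀ τ : ℝ,
      (∑ r ∈ Finset.range (m+1), ∑ s ∈ Finset.range (m+1-r),
          (ω r * ω s) • deriv (deriv (Q (m - r - s))) τ)
        = L.mulVec (Q m τ) +
          ∑ b ∈ Finset.range (m-1), ∑ c ∈ Finset.range (m-1-b),
            (fun j => Q b τ j * Q c τ j * Q (m-2-b-c) τ j)) :
    ∀ m : ℕ, ω (2*m+1) = 0 ∧ ∀ τ : ℝ, Q (2*m+1) τ = 0 :=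
  stmt12_general N L hL ω0 hω0 u0 hu0unit hu0eig hsimple hres ω hω a hafin Q hQform haQ0 horth heq
end

section
/- Let L be a real symmetric N×N matrix, ω₀ > 0, and u₀ ∈ ℝ^N a unit vector with Lu₀ = −ω₀² u₀. Set Q₀(τ) = 2cos(τ)·u₀. Suppose ω₂ ∈ ℝ and Q₂ is a twice continuously differentiable 2π-periodic ℝ^N-valued function with (Q₂, Q₀) = 0, satisfying ω₀² Q̈₂(τ) + 2ω₀ω₂ Q̈₀(τ) = L Q₂(τ) + Q₀(τ)∘Q₀(τ)∘Q₀(τ) for all τ. Then ω₂ = −3⟨u₀∘u₀∘u₀, u₀⟩ / (2ω₀), where ⟨·,·⟩ is the Euclidean inner product on ℝ^N. -/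
/-!
Project the order-ε³ equation onto `u₀`. Since `L` is symmetric and `L u₀ = -ω₀² u₀`, the
scalar `φ(τ) = ⟨Q₂(τ), u₀⟩` satisfies
`ω₀² (φ'' + φ) = 4 ω₀ ω₂ cos τ + 8 ⟨u₀∘u₀∘u₀, u₀⟩ cos³ τ`.
The left side integrates to zero against `cos` over a period, because `φ' cos + φ sin` is a periodic
primitive of `(φ'' + φ) cos` (Fredholm alternative for `d²/dτ² + 1`). With `∫ cos² = π` and
`∫ cos⁴ = 3π/4` this gives `4 ω₀ ω₂ + 6 ⟨u₀∘u₀∘u₀, u₀⟩ = 0`.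
-/

open Real Matrix

theorem Matrix.IsSymm.mulVec_dotProduct_of_mulVec_eq_smul {ι R : Type*} [Fintype ι]
    [CommSemiring R] {L : Matrix ι ι R} (hL : L.IsSymm) {u : ι → R} {μ : R}
    (hu : L *ᵥ u = μ • u) (x : ι → R) :
    L *ᵥ x ⬝ᵥ u = μ * (x ⬝ᵥ u) := by
  rw [dotProduct_comm, dotProduct_mulVec, ← mulVec_transpose, hL.eq, hu, smul_dotProduct,
    smul_eq_mul, dotProduct_comm]

section DotProduct

variable {ι : Type*} [Fintype ι] {Q : ℝ → ι → ℝ}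

theorem HasDerivAt.dotProduct_const {Q' : ι → ℝ} {τ : ℝ} (hQ : HasDerivAt Q Q' τ) (u : ι → ℝ) :
    HasDerivAt (fun s => Q s ⬝ᵥ u) (Q' ⬝ᵥ u) τ :=
  HasDerivAt.fun_sum fun j _ => (hasDerivAt_pi.mp hQ j).mul_const (u j)

theorem deriv_dotProduct_const (hQ : Differentiable ℝ Q) (u : ι → ℝ) :
    deriv (fun s => Q s ⬝ᵥ u) = fun s => deriv Q s ⬝ᵥ u :=
  funext fun τ => ((hQ τ).hasDerivAt.dotProduct_const u).deriv

theorem deriv_deriv_dotProduct_const (hQ : ContDiff ℝ 2 Q) (u : ι → ℝ) :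
    deriv (deriv fun s => Q s ⬝ᵥ u) = fun s => deriv (deriv Q) s ⬝ᵥ u := by
  rw [deriv_dotProduct_const (hQ.differentiable two_ne_zero) u,
    deriv_dotProduct_const hQ.differentiable_deriv_two u]

end DotProduct

theorem deriv_deriv_cos_smul {E : Type*} [NormedAddCommGroup E] [NormedSpace ℝ E]
    (c : ℝ) (v : E) :
    deriv (deriv fun s => (c * cos s) • v) = fun s => -(c * cos s) • v := by
  have h1 : deriv (fun s => (c * cos s) • v) = fun s => -(c * sin s) • v := by
    funext s
    simpa using (((hasDerivAt_cos s).const_mul c).smul_const v).deriv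
  rw [h1]
  funext s
  simpa using (((hasDerivAt_sin s).const_mul c).neg.smul_const v).deriv

theorem integral_deriv_deriv_add_mul_cos_eq_zero {φ : ℝ → ℝ} (hφ : ContDiff ℝ 2 φ)
    (hper : Function.Periodic φ (2 * π)) :
    ∫ τ in (0 : ℝ)..2 * π, (deriv (deriv φ) τ + φ τ) * cos τ = 0 := by
  have hφ' : ContDiff ℝ 1 (deriv φ) := hφ.deriv' (n := 1)
  have hG : ∀ τ, HasDerivAt (fun s => deriv φ s * cos s + φ s * sin s)
      ((deriv (deriv φ) τ + φ τ) * cos τ) τ := fun τ => by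
    refine (((hφ'.differentiable one_ne_zero τ).hasDerivAt.fun_mul (hasDerivAt_cos τ)).fun_add
      (((hφ.differentiable two_ne_zero) τ).hasDerivAt.fun_mul (hasDerivAt_sin τ))).congr_deriv ?_
    ring
  have hcont : Continuous fun τ => (deriv (deriv φ) τ + φ τ) * cos τ := by
    have := hφ'.continuous_deriv_one
    fun_prop
  have hper' : deriv φ (2 * π) = deriv φ 0 := by
    calc deriv φ (2 * π) = deriv (fun τ => φ (τ + 2 * π)) 0 := by simp [deriv_comp_add_const]
      _ = deriv φ 0 := by rw [show (fun τ => φ (τ + 2 * π)) = φ from funext hper]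
  rw [intervalIntegral.integral_eq_sub_of_hasDerivAt (fun τ _ => hG τ)
    (hcont.intervalIntegrable _ _)]
  simp [hper', hper.eq]

theorem integral_mul_cos_add_mul_cos_pow_three_mul_cos (a b : ℝ) :
    ∫ τ in (0 : ℝ)..2 * π, (a * cos τ + b * cos τ ^ 3) * cos τ = π * (a + 3 / 4 * b) := by
  have hcos2 : ∫ τ in (0 : ℝ)..2 * π, cos τ ^ 2 = π := by
    simp [integral_cos_sq]
  have hcos4 : ∫ τ in (0 : ℝ)..2 * π, cos τ ^ 4 = 3 * π / 4 := by
    have := integral_cos_pow (a := 0) (b := 2 * π) (n := 2)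
    norm_num [hcos2] at this
    linarith
  have hsplit : (fun τ => (a * cos τ + b * cos τ ^ 3) * cos τ) =
      fun τ => a * cos τ ^ 2 + b * cos τ ^ 4 := by
    funext τ; ring
  rw [hsplit, intervalIntegral.integral_add, intervalIntegral.integral_const_mul,
    intervalIntegral.integral_const_mul, hcos2, hcos4]
  · ring
  all_goals exact (by fun_prop : Continuous _).intervalIntegrable _ _

theorem stmt13_general (N : ℕ) (L : Matrix (Fin N) (Fin N) ℝ) (hL : L.IsSymm)
    (ω0 ω2 : ℝ) (hω0 : 0 < ω0)
    (u0 : Fin N → ℝ) (hu0unit : ∑ j, (u0 j)^2 = 1)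
    (hu0eig : L.mulVec u0 = (-(ω0^2)) • u0)
    (Q2 : ℝ → Fin N → ℝ) (hQ2 : ContDiff ℝ 2 Q2)
    (hper : ∀ τ : ℝ, Q2 (τ + 2*Real.pi) = Q2 τ)
    (heq : ∀ τ : ℝ,
      (ω0^2) • deriv (deriv Q2) τ +
          (2*ω0*ω2) • deriv (deriv (fun s : ℝ => (2*Real.cos s) • u0)) τ
        = L.mulVec (Q2 τ) + fun j => (2*Real.cos τ * u0 j)^3) :
    ω2 = -(3 * ∑ j, (u0 j)^3 * u0 j) / (2*ω0) := by
  set S := ∑ j, (u0 j)^3 * u0 j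
  set φ : ℝ → ℝ := fun τ => Q2 τ ⬝ᵥ u0
  have hφ : ContDiff ℝ 2 φ := by
    simp only [φ, dotProduct]
    fun_prop
  have hunit : u0 ⬝ᵥ u0 = 1 := by simpa [dotProduct, sq] using hu0unit
  have hcube : ∀ τ, (fun j => (2 * cos τ * u0 j) ^ 3) ⬝ᵥ u0 = 8 * cos τ ^ 3 * S := fun τ => by
    simp only [dotProduct, S, Finset.mul_sum]
    exact Finset.sum_congr rfl fun j _ => by ring
  have hode : ∀ τ,
      ω0 ^ 2 * (deriv (deriv φ) τ + φ τ) = 4 * ω0 * ω2 * cos τ + 8 * S * cos τ ^ 3 := by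
    intro τ
    have h := congrArg (· ⬝ᵥ u0) (heq τ)
    simp only [add_dotProduct, smul_dotProduct, deriv_deriv_cos_smul, hcube,
      hL.mulVec_dotProduct_of_mulVec_eq_smul hu0eig, hunit, smul_eq_mul] at h
    rw [deriv_deriv_dotProduct_const hQ2]
    linear_combination h
  have hsolv : π * (4 * ω0 * ω2 + 3 / 4 * (8 * S)) = 0 := by
    calc π * (4 * ω0 * ω2 + 3 / 4 * (8 * S))
        = ∫ τ in (0 : ℝ)..2 * π, (4 * ω0 * ω2 * cos τ + 8 * S * cos τ ^ 3) * cos τ :=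
          (integral_mul_cos_add_mul_cos_pow_three_mul_cos _ _).symm
      _ = ∫ τ in (0 : ℝ)..2 * π, ω0 ^ 2 * ((deriv (deriv φ) τ + φ τ) * cos τ) := by
          simp only [← hode, ← mul_assoc]
      _ = 0 := by
          rw [intervalIntegral.integral_const_mul,
            integral_deriv_deriv_add_mul_cos_eq_zero hφ (fun τ => by simp only [φ, hper τ]),
            mul_zero]
  rw [eq_div_iff (by positivity)]
  linear_combination (mul_eq_zero.mp hsolv).resolve_left pi_ne_zero / 2

/-- The leading frequency correction of the formal expansion
`Q = ε Q₀ + ε³ Q₂ + ⋯`, `ω = ω₀ + ε² ω₂ + ⋯` of time-periodic solutions of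
`ω² Q″ = L Q + Q∘Q∘Q` is `ω₂ = −3⟨u₀∘u₀∘u₀, u₀⟩/(2ω₀)`. -/
theorem stmt13 (N : ℕ) (L : Matrix (Fin N) (Fin N) ℝ) (hL : L.IsSymm)
    (ω0 ω2 : ℝ) (hω0 : 0 < ω0)
    (u0 : Fin N → ℝ) (hu0unit : ∑ j, (u0 j)^2 = 1)
    (hu0eig : L.mulVec u0 = (-(ω0^2)) • u0)
    (Q2 : ℝ → Fin N → ℝ) (hQ2 : ContDiff ℝ 2 Q2)
    (hper : ∀ τ : ℝ, Q2 (τ + 2*Real.pi) = Q2 τ)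
    (horth : (1/(2*Real.pi)) *
        ∫ τ in (0 : ℝ)..(2*Real.pi), ∑ j, Q2 τ j * (2*Real.cos τ * u0 j) = 0)
    (heq : ∀ τ : ℝ,
      (ω0^2) • deriv (deriv Q2) τ +
          (2*ω0*ω2) • deriv (deriv (fun s : ℝ => (2*Real.cos s) • u0)) τ
        = L.mulVec (Q2 τ) + fun j => (2*Real.cos τ * u0 j)^3) :
    ω2 = -(3 * ∑ j, (u0 j)^3 * u0 j) / (2*ω0) :=
  stmt13_general N L hL ω0 ω2 hω0 u0 hu0unit hu0eig Q2 hQ2 hper heq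
end

section
/- For every positive integer k, Σ over pairs (a, b) of positive integers with a + b = k + 1 and a ≤ b of 1/((a² + 2)(b² + 2)) is strictly less than ((2π² − 8)/3) · 1/((k+1)² + 2); in particular it is strictly less than 4/((k+1)² + 2). -/
/-!
For `a ≤ b` with `a + b = k + 1` we have `(k + 1)² ≤ 4 b²`, so each term is at most
`4 / ((k + 1)² + 2)` times `1 / (a² + 2)`, and the remaining sum over `a` is bounded by
telescoping: `1 / (a² + 2) < 1 / (a² - 1/4) = 2 / (2a - 1) - 2 / (2a + 1)`. Keeping the first two
terms exactly gives `∑_{a ≥ 1} 1 / (a² + 2) < 1/3 + 1/6 + 2/5 = 9/10`, and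
`4 · 9/10 < (2π² - 8)/3` as soon as `π > 3.14`.
-/

open Finset

lemma one_div_sq_add_two_lt_sub {x : ℝ} (hx : 1 / 2 < x) :
    1 / (x ^ 2 + 2) < 2 / (2 * x - 1) - 2 / (2 * x + 1) := by
  rw [div_sub_div _ _ (by linarith) (by linarith), div_lt_div_iff₀ (by positivity) (by nlinarith)]
  nlinarith

lemma sum_Ico_one_div_sq_add_two_le {m n : ℕ} (hm : 1 ≤ m) (hmn : m ≤ n) :
    ∑ a ∈ Ico m n, 1 / ((a : ℝ) ^ 2 + 2) ≤
      2 / (2 * (m : ℝ) - 1) - 2 / (2 * (n : ℝ) - 1) := by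
  calc ∑ a ∈ Ico m n, 1 / ((a : ℝ) ^ 2 + 2)
      ≤ ∑ a ∈ Ico m n, (2 / (2 * (a : ℝ) - 1) - 2 / (2 * ((a + 1 : ℕ) : ℝ) - 1)) := by
        refine sum_le_sum fun a ha => ?_
        have ha : (1 : ℝ) ≤ a := by exact_mod_cast hm.trans (mem_Ico.1 ha).1
        have := one_div_sq_add_two_lt_sub (x := (a : ℝ)) (by linarith)
        rw [Nat.cast_succ, show 2 * ((a : ℝ) + 1) - 1 = 2 * a + 1 by ring]
        exact this.le
    _ = 2 / (2 * (m : ℝ) - 1) - 2 / (2 * (n : ℝ) - 1) := by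
        simpa only [neg_sub_neg] using sum_Ico_sub (fun a : ℕ => -(2 / (2 * (a : ℝ) - 1))) hmn

lemma sum_Icc_one_div_sq_add_two_lt (k : ℕ) :
    ∑ a ∈ Icc 1 k, 1 / ((a : ℝ) ^ 2 + 2) < 9 / 10 := by
  have htail := sum_Ico_one_div_sq_add_two_le (m := 3) (n := k + 3) (by norm_num) (by omega)
  have hk : (0 : ℝ) < 2 / (2 * ((k : ℝ) + 3) - 1) :=
    div_pos two_pos (by linarith [(k.cast_nonneg : (0 : ℝ) ≤ k)])
  calc ∑ a ∈ Icc 1 k, 1 / ((a : ℝ) ^ 2 + 2)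
      ≤ ∑ a ∈ Ico 1 (k + 3), 1 / ((a : ℝ) ^ 2 + 2) :=
        sum_le_sum_of_subset_of_nonneg (Icc_subset_Ico_right (by omega)) fun _ _ _ => by positivity
    _ = 1 / 3 + 1 / 6 + ∑ a ∈ Ico 3 (k + 3), 1 / ((a : ℝ) ^ 2 + 2) := by
        rw [sum_eq_sum_Ico_succ_bot (by omega), sum_eq_sum_Ico_succ_bot (by omega)]
        norm_num
        ring
    _ < 9 / 10 := by push_cast at htail; linarith

lemma one_div_sq_add_two_le_of_le {a b : ℝ} (ha : 0 ≤ a) (hab : a ≤ b) :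
    1 / (b ^ 2 + 2) ≤ 4 / ((a + b) ^ 2 + 2) := by
  rw [div_le_div_iff₀ (by positivity) (by positivity)]
  nlinarith

lemma sum_filter_antidiagonal_le (k : ℕ) :
    ∑ p ∈ (antidiagonal (k + 1)).filter (fun p => 1 ≤ p.1 ∧ p.1 ≤ p.2),
        (1 : ℝ) / (((p.1 : ℝ) ^ 2 + 2) * ((p.2 : ℝ) ^ 2 + 2))
      ≤ 4 / (((k : ℝ) + 1) ^ 2 + 2) * ∑ a ∈ Icc 1 k, 1 / ((a : ℝ) ^ 2 + 2) := by
  set F := (antidiagonal (k + 1)).filter (fun p => 1 ≤ p.1 ∧ p.1 ≤ p.2)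
  have hF : ∀ p ∈ F, p.1 + p.2 = k + 1 ∧ 1 ≤ p.1 ∧ p.1 ≤ p.2 := fun p hp => by
    simpa only [F, mem_filter, HasAntidiagonal.mem_antidiagonal] using hp
  have hinj : Set.InjOn Prod.fst (F : Set (ℕ × ℕ)) := fun p hp q hq =>
    (HasAntidiagonal.antidiagonal_congr (mem_filter.1 hp).1 (mem_filter.1 hq).1).2
  calc ∑ p ∈ F, (1 : ℝ) / (((p.1 : ℝ) ^ 2 + 2) * ((p.2 : ℝ) ^ 2 + 2))
      ≤ ∑ p ∈ F, 4 / (((k : ℝ) + 1) ^ 2 + 2) * (1 / ((p.1 : ℝ) ^ 2 + 2)) := by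
        refine sum_le_sum fun p hp => ?_
        obtain ⟨hsum, -, hle⟩ := hF p hp
        have hk : (k : ℝ) + 1 = p.1 + p.2 := by exact_mod_cast hsum.symm
        rw [hk, ← one_div_mul_one_div, mul_comm (1 / ((p.1 : ℝ) ^ 2 + 2))]
        exact mul_le_mul_of_nonneg_right
          (one_div_sq_add_two_le_of_le (Nat.cast_nonneg _) (Nat.cast_le.2 hle)) (by positivity)
    _ = 4 / (((k : ℝ) + 1) ^ 2 + 2) * ∑ a ∈ F.image Prod.fst, 1 / ((a : ℝ) ^ 2 + 2) := by
        rw [← mul_sum, sum_image hinj]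
    _ ≤ 4 / (((k : ℝ) + 1) ^ 2 + 2) * ∑ a ∈ Icc 1 k, 1 / ((a : ℝ) ^ 2 + 2) := by
        refine mul_le_mul_of_nonneg_left (sum_le_sum_of_subset_of_nonneg (fun a ha => ?_)
          fun _ _ _ => by positivity) (by positivity)
        obtain ⟨p, hp, rfl⟩ := mem_image.1 ha
        obtain ⟨hsum, h1, hle⟩ := hF p hp
        exact mem_Icc.2 ⟨h1, by omega⟩

open Finset in
theorem stmt16_general (k : ℕ) :
    (∑ p ∈ (Finset.HasAntidiagonal.antidiagonal (k+1)).filter (fun p => 1 ≤ p.1 ∧ p.1 ≤ p.2),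
        (1 : ℝ) / (((p.1 : ℝ)^2 + 2) * ((p.2 : ℝ)^2 + 2)))
      < ((2*Real.pi^2 - 8)/3) * (1 / (((k : ℝ) + 1)^2 + 2)) ∧
    (∑ p ∈ (Finset.HasAntidiagonal.antidiagonal (k+1)).filter (fun p => 1 ≤ p.1 ∧ p.1 ≤ p.2),
        (1 : ℝ) / (((p.1 : ℝ)^2 + 2) * ((p.2 : ℝ)^2 + 2)))
      < 4 / (((k : ℝ) + 1)^2 + 2) := by
  have hC_gt : (18 / 5 : ℝ) < (2 * Real.pi ^ 2 - 8) / 3 := by nlinarith [Real.pi_gt_d2]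
  have hC_lt : (2 * Real.pi ^ 2 - 8) / 3 < 4 := by nlinarith [Real.pi_gt_d2, Real.pi_lt_d2]
  have hmain := calc
    _ ≤ _ := sum_filter_antidiagonal_le k
    _ < 4 / (((k : ℝ) + 1) ^ 2 + 2) * (9 / 10) := by
        gcongr
        exact sum_Icc_one_div_sq_add_two_lt k
    _ = 18 / 5 * (1 / (((k : ℝ) + 1) ^ 2 + 2)) := by ring
    _ < (2 * Real.pi ^ 2 - 8) / 3 * (1 / (((k : ℝ) + 1) ^ 2 + 2)) := by gcongr
  refine ⟨hmain, hmain.trans ?_⟩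
  rw [← mul_one_div 4]
  gcongr

open Finset in
/-- `Σ_{(a,b) ∈ E₃^{1*}(k)} 1/((a²+2)(b²+2)) < ((2π²−8)/3)·1/((k+1)²+2) < 4/((k+1)²+2)`,
where `E₃^{1*}(k) = {(a,b) : a,b ≥ 1, a + b = k + 1, a ≤ b}`. -/
theorem stmt16 (k : ℕ) (hk : 0 < k) :
    (∑ p ∈ (Finset.HasAntidiagonal.antidiagonal (k+1)).filter (fun p => 1 ≤ p.1 ∧ p.1 ≤ p.2),
        (1 : ℝ) / (((p.1 : ℝ)^2 + 2) * ((p.2 : ℝ)^2 + 2)))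
      < ((2*Real.pi^2 - 8)/3) * (1 / (((k : ℝ) + 1)^2 + 2)) ∧
    (∑ p ∈ (Finset.HasAntidiagonal.antidiagonal (k+1)).filter (fun p => 1 ≤ p.1 ∧ p.1 ≤ p.2),
        (1 : ℝ) / (((p.1 : ℝ)^2 + 2) * ((p.2 : ℝ)^2 + 2)))
      < 4 / (((k : ℝ) + 1)^2 + 2) :=
  stmt16_general k
end

section
/- For every positive integer k, Σ over pairs (a, b) of nonnegative integers with a + b = k + 1 of 1/((a² + 2)(b² + 2)) is strictly less than 12/((k+1)² + 2). -/
/-! Since `(a + b)² ≤ 2(a² + b²)`, each term satisfies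
`1/((a²+2)(b²+2)) ≤ 2/((a+b)²+2) · (1/(a²+2) + 1/(b²+2))`, so the sum is at most
`4/((k+1)²+2) · ∑_{a ≥ 0} 1/(a²+2)`. Comparing with the telescoping series
`1/(a²+2) < 1/(a²-1/4) = 2/(2a-1) - 2/(2a+1)` bounds that series by `5/2`, and `4 · 5/2 < 12`. -/

open Finset

lemma one_div_sq_add_two_mul_le (a b : ℝ) :
    1 / ((a ^ 2 + 2) * (b ^ 2 + 2)) ≤
      2 / ((a + b) ^ 2 + 2) * (1 / (a ^ 2 + 2) + 1 / (b ^ 2 + 2)) := by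
  have hsq : (a + b) ^ 2 + 2 ≤ 2 * ((a ^ 2 + 2) + (b ^ 2 + 2)) := by
    nlinarith [sq_nonneg (a - b)]
  have hrhs : 2 / ((a + b) ^ 2 + 2) * (1 / (a ^ 2 + 2) + 1 / (b ^ 2 + 2)) =
      2 * ((a ^ 2 + 2) + (b ^ 2 + 2)) / ((a + b) ^ 2 + 2) / ((a ^ 2 + 2) * (b ^ 2 + 2)) := by
    field_simp
    ring
  rw [hrhs]
  gcongr
  rw [le_div_iff₀ (by positivity), one_mul]
  exact hsq

lemma sum_range_one_div_sq_add_two_le (n : ℕ) :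
    ∑ a ∈ range (n + 1), 1 / ((a : ℝ) ^ 2 + 2) ≤ 5 / 2 - 2 / (2 * (n : ℝ) + 1) := by
  induction n with
  | zero => norm_num
  | succ n ih =>
    have hstep : 1 / (((n : ℝ) + 1) ^ 2 + 2) ≤
        2 / (2 * (n : ℝ) + 1) - 2 / (2 * ((n : ℝ) + 1) + 1) := by
      rw [div_sub_div _ _ (by positivity) (by positivity), div_le_div_iff₀ (by positivity)
        (by positivity)]
      nlinarith
    rw [sum_range_succ]
    push_cast
    linarith

lemma sum_range_one_div_sq_add_two_le_five_div_two (n : ℕ) :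
    ∑ a ∈ range n, 1 / ((a : ℝ) ^ 2 + 2) ≤ 5 / 2 := by
  calc ∑ a ∈ range n, (1 : ℝ) / ((a : ℝ) ^ 2 + 2)
      ≤ ∑ a ∈ range (n + 1), 1 / ((a : ℝ) ^ 2 + 2) :=
        sum_le_sum_of_subset_of_nonneg (range_subset_range.2 n.le_succ)
          fun _ _ _ => by positivity
    _ ≤ 5 / 2 - 2 / (2 * (n : ℝ) + 1) := sum_range_one_div_sq_add_two_le n
    _ ≤ 5 / 2 := sub_le_self _ (by positivity)

lemma sum_antidiagonal_add_comp_fst_snd {M : Type*} [AddCommMonoid M] (f : ℕ → M) (n : ℕ) :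
    ∑ p ∈ antidiagonal n, (f p.1 + f p.2) = 2 • ∑ a ∈ range (n + 1), f a := by
  have hswap : ∑ p ∈ antidiagonal n, f p.2 = ∑ p ∈ antidiagonal n, f p.1 :=
    Nat.sum_antidiagonal_swap (f := fun p => f p.1)
  rw [sum_add_distrib, hswap, two_nsmul, Nat.sum_antidiagonal_eq_sum_range_succ_mk]

theorem stmt17_general (k : ℕ) :
    (∑ p ∈ Finset.HasAntidiagonal.antidiagonal (k+1),
        (1 : ℝ) / (((p.1 : ℝ)^2 + 2) * ((p.2 : ℝ)^2 + 2)))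
      < 12 / (((k : ℝ) + 1)^2 + 2) := by
  set f : ℕ → ℝ := fun a => 1 / ((a : ℝ) ^ 2 + 2)
  calc (∑ p ∈ antidiagonal (k + 1), (1 : ℝ) / (((p.1 : ℝ) ^ 2 + 2) * ((p.2 : ℝ) ^ 2 + 2)))
      ≤ ∑ p ∈ antidiagonal (k + 1), 2 / (((k : ℝ) + 1) ^ 2 + 2) * (f p.1 + f p.2) := by
        refine sum_le_sum fun p hp => ?_
        have hp : (p.1 : ℝ) + p.2 = (k : ℝ) + 1 := by exact_mod_cast mem_antidiagonal.1 hp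
        simpa only [hp] using one_div_sq_add_two_mul_le (p.1 : ℝ) p.2
    _ = 2 / (((k : ℝ) + 1) ^ 2 + 2) * (2 * ∑ a ∈ range (k + 1 + 1), f a) := by
        rw [← mul_sum, sum_antidiagonal_add_comp_fst_snd, nsmul_eq_mul, Nat.cast_ofNat]
    _ ≤ 2 / (((k : ℝ) + 1) ^ 2 + 2) * (2 * (5 / 2)) := by
        gcongr
        exact sum_range_one_div_sq_add_two_le_five_div_two _
    _ < 12 / (((k : ℝ) + 1) ^ 2 + 2) := by
        rw [← mul_div_right_comm]
        gcongr
        norm_num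

/-- `Σ_{(a,b) ∈ E₃⁰(k)} 1/((a²+2)(b²+2)) < 12/((k+1)²+2)`,
where `E₃⁰(k) = {(a,b) : a,b ≥ 0, a + b = k + 1}`. -/
theorem stmt17 (k : ℕ) (hk : 0 < k) :
    (∑ p ∈ Finset.HasAntidiagonal.antidiagonal (k+1),
        (1 : ℝ) / (((p.1 : ℝ)^2 + 2) * ((p.2 : ℝ)^2 + 2)))
      < 12 / (((k : ℝ) + 1)^2 + 2) :=
  stmt17_general k
end

section
/- For every integer k ≥ 2, Σ over triples (a, b, c) of positive integers with a + b + c = k + 1 and a ≤ b of 1/((a² + 2)(b² + 2)(c² + 2)) is strictly less than ((2π² − 8)/3)·((4π² − 4)/3) · 1/((k+1)² + 2); in particular it is strictly less than 48/((k+1)² + 2). -/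
/-!
Write `w x = 1 / (x² + 2)`. Since `a ≤ b` and `a + b + c = k + 1`, one of `b`, `c` is at least
`(k + 1) / 3`, and then its factor is at most `9 w (k + 1)`. The two remaining coordinates
determine the triple, so the rest of the sum is bounded by `(∑ₙ w n)² ≤ (4/3)²` once for each
choice of the large coordinate, which gives `32 w (k + 1)`. The constant of the theorem lies in
`(32, 48)` because `9 < π² < 10`.
-/

open Finset

noncomputable def weight (x : ℝ) : ℝ := 1 / (x ^ 2 + 2)

lemma weight_nonneg (x : ℝ) : 0 ≤ weight x := by
  unfold weight; positivity

lemma weight_le_nine_mul {x y : ℝ} (hx : 0 ≤ x) (hxy : x ≤ 3 * y) :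
    weight y ≤ 9 * weight x := by
  unfold weight
  rw [mul_one_div, div_le_div_iff₀ (by positivity) (by positivity)]
  nlinarith

/-- Telescoping against `1 / n - 1 / (n + 1)`. -/
lemma sum_weight_Icc_one_succ_le (n : ℕ) :
    ∑ a ∈ Icc 1 (n + 1), weight a ≤ 4 / 3 - 1 / ((n : ℝ) + 1) := by
  induction n with
  | zero => norm_num [weight]
  | succ n ih =>
    rw [sum_Icc_succ_top (by omega)]
    have hstep : weight ((n + 1 + 1 : ℕ) : ℝ) ≤ 1 / ((n : ℝ) + 1) - 1 / ((n : ℝ) + 1 + 1) := by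
      rw [weight, div_sub_div _ _ (by positivity) (by positivity),
        div_le_div_iff₀ (by positivity) (by positivity)]
      push_cast
      nlinarith
    push_cast at hstep ⊢
    linarith

lemma sum_weight_Icc_le (m : ℕ) : ∑ a ∈ Icc 1 m, weight a ≤ 4 / 3 := by
  cases m with
  | zero => norm_num
  | succ n =>
    have : 0 < 1 / ((n : ℝ) + 1) := by positivity
    linarith [sum_weight_Icc_one_succ_le n]

lemma sum_weight_mul_weight_le {ι : Type*} (s : Finset ι) (φ : ι → ℕ × ℕ) (hφ : Set.InjOn φ s)
    (m : ℕ) (hmem : ∀ p ∈ s, φ p ∈ Icc 1 m ×ˢ Icc 1 m) :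
    ∑ p ∈ s, weight (φ p).1 * weight (φ p).2 ≤ 16 / 9 :=
  calc ∑ p ∈ s, weight (φ p).1 * weight (φ p).2
      = ∑ q ∈ s.image φ, weight q.1 * weight q.2 :=
        (sum_image (f := fun q : ℕ × ℕ ↦ weight q.1 * weight q.2) hφ).symm
    _ ≤ ∑ q ∈ Icc 1 m ×ˢ Icc 1 m, weight q.1 * weight q.2 :=
        sum_le_sum_of_subset_of_nonneg (image_subset_iff.2 hmem)
          fun q _ _ ↦ mul_nonneg (weight_nonneg _) (weight_nonneg _)
    _ = (∑ a ∈ Icc 1 m, weight a) * ∑ b ∈ Icc 1 m, weight b := by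
        rw [sum_product, sum_mul_sum]
    _ ≤ 4 / 3 * (4 / 3) :=
        mul_le_mul (sum_weight_Icc_le m) (sum_weight_Icc_le m)
          (sum_nonneg fun _ _ ↦ weight_nonneg _) (by norm_num)
    _ = 16 / 9 := by norm_num

lemma weight_mul_weight_mul_weight_le {x a b c : ℝ} (hx : 0 ≤ x) (h : x ≤ 3 * b ∨ x ≤ 3 * c) :
    weight a * weight b * weight c ≤
      9 * weight x * (weight a * weight c + weight a * weight b) := by
  have h9x : 0 ≤ 9 * weight x := mul_nonneg (by norm_num) (weight_nonneg x)
  have hab := mul_nonneg (weight_nonneg a) (weight_nonneg b)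
  have hac := mul_nonneg (weight_nonneg a) (weight_nonneg c)
  rcases h with hb | hc
  · nlinarith [mul_le_mul_of_nonneg_right (weight_le_nine_mul hx hb) hac, mul_nonneg h9x hab]
  · nlinarith [mul_le_mul_of_nonneg_right (weight_le_nine_mul hx hc) hab, mul_nonneg h9x hac]

lemma sum_weight_triple_le (n : ℕ) (t : Finset (ℕ × ℕ × ℕ)) :
    ∑ p ∈ t.filter (fun p ↦ p.1 + p.2.1 + p.2.2 = n ∧ 1 ≤ p.1 ∧ 1 ≤ p.2.1 ∧ 1 ≤ p.2.2 ∧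
      p.1 ≤ p.2.1), weight p.1 * weight p.2.1 * weight p.2.2 ≤ 32 * weight n := by
  set s := t.filter (fun p ↦ p.1 + p.2.1 + p.2.2 = n ∧ 1 ≤ p.1 ∧ 1 ≤ p.2.1 ∧ 1 ≤ p.2.2 ∧
    p.1 ≤ p.2.1)
  have hs (p) (hp : p ∈ s) := (mem_filter.1 hp).2
  have hac := sum_weight_mul_weight_le s (fun p ↦ (p.1, p.2.2))
    (fun p hp q hq hpq ↦ by
      have := hs p hp; have := hs q hq
      simp only [Prod.mk.injEq] at hpq
      ext <;> omega)
    n (fun p hp ↦ by have := hs p hp; simp only [mem_product, mem_Icc]; omega)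
  have hab := sum_weight_mul_weight_le s (fun p ↦ (p.1, p.2.1))
    (fun p hp q hq hpq ↦ by
      have := hs p hp; have := hs q hq
      simp only [Prod.mk.injEq] at hpq
      ext <;> omega)
    n (fun p hp ↦ by have := hs p hp; simp only [mem_product, mem_Icc]; omega)
  calc ∑ p ∈ s, weight p.1 * weight p.2.1 * weight p.2.2
      ≤ ∑ p ∈ s, 9 * weight n * (weight p.1 * weight p.2.2 + weight p.1 * weight p.2.1) := by
        refine sum_le_sum fun p hp ↦ weight_mul_weight_mul_weight_le (Nat.cast_nonneg n) ?_
        have := hs p hp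
        exact_mod_cast (by omega : n ≤ 3 * p.2.1 ∨ n ≤ 3 * p.2.2)
    _ = 9 * weight n *
          (∑ p ∈ s, weight p.1 * weight p.2.2 + ∑ p ∈ s, weight p.1 * weight p.2.1) := by
        rw [← mul_sum, sum_add_distrib]
    _ ≤ 9 * weight n * (16 / 9 + 16 / 9) := by
        have := weight_nonneg n
        gcongr
    _ = 32 * weight n := by ring

lemma pi_sq_const_mem_Ioo :
    (2 * Real.pi ^ 2 - 8) / 3 * ((4 * Real.pi ^ 2 - 4) / 3) ∈ Set.Ioo 32 48 := by
  have h9 : 9 < Real.pi ^ 2 := by nlinarith [Real.pi_gt_three]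
  have h10 : Real.pi ^ 2 < 10 := by nlinarith [Real.pi_lt_d2, Real.pi_pos]
  constructor <;> nlinarith

theorem stmt18_general (k : ℕ) :
    (∑ p ∈ (Finset.range (k+2) ×ˢ Finset.range (k+2) ×ˢ Finset.range (k+2)).filter
        (fun p : ℕ × ℕ × ℕ =>
          p.1 + p.2.1 + p.2.2 = k + 1 ∧ 1 ≤ p.1 ∧ 1 ≤ p.2.1 ∧ 1 ≤ p.2.2 ∧
          p.1 ≤ p.2.1),
        (1 : ℝ) / (((p.1 : ℝ)^2 + 2) * ((p.2.1 : ℝ)^2 + 2) * ((p.2.2 : ℝ)^2 + 2)))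
      < ((2*Real.pi^2 - 8)/3) * ((4*Real.pi^2 - 4)/3) * (1 / (((k : ℝ) + 1)^2 + 2)) ∧
    (∑ p ∈ (Finset.range (k+2) ×ˢ Finset.range (k+2) ×ˢ Finset.range (k+2)).filter
        (fun p : ℕ × ℕ × ℕ =>
          p.1 + p.2.1 + p.2.2 = k + 1 ∧ 1 ≤ p.1 ∧ 1 ≤ p.2.1 ∧ 1 ≤ p.2.2 ∧
          p.1 ≤ p.2.1),
        (1 : ℝ) / (((p.1 : ℝ)^2 + 2) * ((p.2.1 : ℝ)^2 + 2) * ((p.2.2 : ℝ)^2 + 2)))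
      < 48 / (((k : ℝ) + 1)^2 + 2) := by
  have hsum := sum_weight_triple_le (k + 1) (range (k + 2) ×ˢ range (k + 2) ×ˢ range (k + 2))
  simp only [weight, one_div, Nat.cast_add, Nat.cast_one] at hsum
  obtain ⟨h32, h48⟩ := pi_sq_const_mem_Ioo
  have hN : 0 < (((k : ℝ) + 1) ^ 2 + 2)⁻¹ := by positivity
  have hlt := hsum.trans_lt (mul_lt_mul_of_pos_right h32 hN)
  simp only [one_div, mul_inv]
  refine ⟨hlt, hlt.trans ?_⟩
  rw [div_eq_mul_inv]
  exact mul_lt_mul_of_pos_right h48 hN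

/-- `Σ_{(a,b,c) ∈ E₂^{1*}(k)} 1/((a²+2)(b²+2)(c²+2))
      < ((2π²−8)/3)·((4π²−4)/3)·1/((k+1)²+2) < 48/((k+1)²+2)`,
where `E₂^{1*}(k) = {(a,b,c) : a,b,c ≥ 1, a + b + c = k + 1, a ≤ b}`. -/
theorem stmt18 (k : ℕ) (hk : 2 ≤ k) :
    (∑ p ∈ (Finset.range (k+2) ×ˢ Finset.range (k+2) ×ˢ Finset.range (k+2)).filter
        (fun p : ℕ × ℕ × ℕ =>
          p.1 + p.2.1 + p.2.2 = k + 1 ∧ 1 ≤ p.1 ∧ 1 ≤ p.2.1 ∧ 1 ≤ p.2.2 ∧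
          p.1 ≤ p.2.1),
        (1 : ℝ) / (((p.1 : ℝ)^2 + 2) * ((p.2.1 : ℝ)^2 + 2) * ((p.2.2 : ℝ)^2 + 2)))
      < ((2*Real.pi^2 - 8)/3) * ((4*Real.pi^2 - 4)/3) * (1 / (((k : ℝ) + 1)^2 + 2)) ∧
    (∑ p ∈ (Finset.range (k+2) ×ˢ Finset.range (k+2) ×ˢ Finset.range (k+2)).filter
        (fun p : ℕ × ℕ × ℕ =>
          p.1 + p.2.1 + p.2.2 = k + 1 ∧ 1 ≤ p.1 ∧ 1 ≤ p.2.1 ∧ 1 ≤ p.2.2 ∧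
          p.1 ≤ p.2.1),
        (1 : ℝ) / (((p.1 : ℝ)^2 + 2) * ((p.2.1 : ℝ)^2 + 2) * ((p.2.2 : ℝ)^2 + 2)))
      < 48 / (((k : ℝ) + 1)^2 + 2) :=
  stmt18_general k
end

section
/- For every positive integer k, Σ over triples (a, b, c) of nonnegative integers with a + b + c = k and a ≤ b ≤ c of 1/((a² + 2)(b² + 2)(c² + 2)) is strictly less than ((2π² − 2)/3)² · 1/(k² + 2); in particular it is strictly less than 36/(k² + 2). -/
/-!
Since `a ≤ b ≤ c` and `a + b + c = k`, the largest index satisfies `c ≥ k / 3`, so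
`1 / (c² + 2) ≤ 9 / (k² + 2)`. The remaining factor is bounded by dropping `c` (it is
determined by `a` and `b`) and summing over all pairs, which gives `S²` with
`S = ∑ 1 / (a² + 2) < 1/2 + 1/3 + ∑_{a ≥ 2} 1 / (a (a - 1)) = 11/6`.
Hence the sum is below `9 · (11/6)² / (k² + 2) = (121/4) / (k² + 2)`, and `121/4` is below
both `((2π² − 2)/3)² ≈ 34.9` and `36`.
-/

open Finset

lemma Finset.sum_comp_le_sum_of_injOn {ι κ M : Type*} [AddCommMonoid M] [PartialOrder M]
    [IsOrderedAddMonoid M] {s : Finset ι} {t : Finset κ} {g : ι → κ} (hg : Set.InjOn g s)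
    (hst : Set.MapsTo g s t) {f : κ → M} (hf : ∀ y ∈ t, 0 ≤ f y) :
    ∑ x ∈ s, f (g x) ≤ ∑ y ∈ t, f y := by
  classical
  rw [← sum_image hg]
  exact sum_le_sum_of_subset_of_nonneg (image_subset_iff.2 hst) fun y hy _ => hf y hy

lemma sum_range_add_two_one_div_sq_add_two_le (n : ℕ) :
    ∑ a ∈ range (n + 2), 1 / ((a : ℝ) ^ 2 + 2) ≤ 11 / 6 - 1 / ((n : ℝ) + 1) := by
  induction n with
  | zero => norm_num [sum_range_succ]
  | succ n ih =>
    have telescoping :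
        1 / (((n + 2 : ℕ) : ℝ) ^ 2 + 2) ≤ 1 / ((n : ℝ) + 1) - 1 / ((n : ℝ) + 1 + 1) := by
      rw [div_sub_div _ _ (by positivity) (by positivity),
        div_le_div_iff₀ (by positivity) (by positivity)]
      push_cast
      nlinarith
    rw [sum_range_succ]
    push_cast at ih telescoping ⊢
    linarith

lemma sum_range_one_div_sq_add_two_lt (n : ℕ) :
    ∑ a ∈ range n, 1 / ((a : ℝ) ^ 2 + 2) < 11 / 6 :=
  calc ∑ a ∈ range n, 1 / ((a : ℝ) ^ 2 + 2)
      ≤ ∑ a ∈ range (n + 2), 1 / ((a : ℝ) ^ 2 + 2) :=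
        sum_le_sum_of_subset_of_nonneg (range_mono (by omega)) fun _ _ _ => by positivity
    _ ≤ 11 / 6 - 1 / ((n : ℝ) + 1) := sum_range_add_two_one_div_sq_add_two_le n
    _ < 11 / 6 := by linarith [show 0 < 1 / ((n : ℝ) + 1) by positivity]

lemma one_div_sq_add_two_le_of_le_three_mul {k c : ℕ} (h : k ≤ 3 * c) :
    1 / ((c : ℝ) ^ 2 + 2) ≤ 9 / ((k : ℝ) ^ 2 + 2) := by
  have hR : (k : ℝ) ≤ 3 * c := by exact_mod_cast h
  rw [div_le_div_iff₀ (by positivity) (by positivity)]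
  nlinarith [Nat.cast_nonneg (α := ℝ) k]

def orderedTriples (k : ℕ) : Finset (ℕ × ℕ × ℕ) :=
  (range (k + 1) ×ˢ range (k + 1) ×ˢ range (k + 1)).filter
    fun p => p.1 + p.2.1 + p.2.2 = k ∧ p.1 ≤ p.2.1 ∧ p.2.1 ≤ p.2.2

lemma sum_orderedTriples_lt (k : ℕ) :
    ∑ p ∈ orderedTriples k,
        1 / (((p.1 : ℝ) ^ 2 + 2) * ((p.2.1 : ℝ) ^ 2 + 2) * ((p.2.2 : ℝ) ^ 2 + 2))
      < 121 / 4 / ((k : ℝ) ^ 2 + 2) := by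
  set f : ℕ × ℕ → ℝ := fun q => 1 / ((q.1 : ℝ) ^ 2 + 2) * (1 / ((q.2 : ℝ) ^ 2 + 2))
  set S := ∑ a ∈ range (k + 1), 1 / ((a : ℝ) ^ 2 + 2)
  have hS : S < 11 / 6 := sum_range_one_div_sq_add_two_lt _
  have hS0 : 0 ≤ S := sum_nonneg fun _ _ => by positivity
  have drop_largest :
      ∑ p ∈ orderedTriples k, f (p.1, p.2.1) ≤ ∑ q ∈ range (k + 1) ×ˢ range (k + 1), f q := by
    refine sum_comp_le_sum_of_injOn ?_ ?_ fun _ _ => by positivity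
    · intro p hp q hq hpq
      simp only [orderedTriples, mem_coe, mem_filter, Prod.mk.injEq] at hp hq hpq
      ext <;> omega
    · intro p hp
      simp only [orderedTriples, mem_coe, mem_filter, mem_product] at hp ⊢
      exact ⟨hp.1.1, hp.1.2.1⟩
  calc _ ≤ ∑ p ∈ orderedTriples k, 9 / ((k : ℝ) ^ 2 + 2) * f (p.1, p.2.1) := by
        refine sum_le_sum fun p hp => ?_
        simp only [orderedTriples, mem_filter] at hp
        rw [← one_div_mul_one_div, ← one_div_mul_one_div, mul_comm]
        exact mul_le_mul_of_nonneg_right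
          (one_div_sq_add_two_le_of_le_three_mul (by omega)) (by positivity)
    _ = 9 / ((k : ℝ) ^ 2 + 2) * ∑ p ∈ orderedTriples k, f (p.1, p.2.1) := (mul_sum ..).symm
    _ ≤ 9 / ((k : ℝ) ^ 2 + 2) * ∑ q ∈ range (k + 1) ×ˢ range (k + 1), f q := by gcongr
    _ = 9 / ((k : ℝ) ^ 2 + 2) * (S * S) := by rw [sum_mul_sum, ← sum_product']
    _ < 9 / ((k : ℝ) ^ 2 + 2) * (11 / 6 * (11 / 6)) := by gcongr
    _ = 121 / 4 / ((k : ℝ) ^ 2 + 2) := by ring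

theorem stmt19_general (k : ℕ) :
    (∑ p ∈ (Finset.range (k+1) ×ˢ Finset.range (k+1) ×ˢ Finset.range (k+1)).filter
        (fun p : ℕ × ℕ × ℕ =>
          p.1 + p.2.1 + p.2.2 = k ∧ p.1 ≤ p.2.1 ∧ p.2.1 ≤ p.2.2),
        (1 : ℝ) / (((p.1 : ℝ)^2 + 2) * ((p.2.1 : ℝ)^2 + 2) * ((p.2.2 : ℝ)^2 + 2)))
      < ((2*Real.pi^2 - 2)/3)^2 * (1 / ((k : ℝ)^2 + 2)) ∧
    (∑ p ∈ (Finset.range (k+1) ×ˢ Finset.range (k+1) ×ˢ Finset.range (k+1)).filter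
        (fun p : ℕ × ℕ × ℕ =>
          p.1 + p.2.1 + p.2.2 = k ∧ p.1 ≤ p.2.1 ∧ p.2.1 ≤ p.2.2),
        (1 : ℝ) / (((p.1 : ℝ)^2 + 2) * ((p.2.1 : ℝ)^2 + 2) * ((p.2.2 : ℝ)^2 + 2)))
      < 36 / ((k : ℝ)^2 + 2) := by
  have h := sum_orderedTriples_lt k
  have hconst : (121 / 4 : ℝ) ≤ ((2 * Real.pi ^ 2 - 2) / 3) ^ 2 := by
    have : (11 / 2 : ℝ) ≤ (2 * Real.pi ^ 2 - 2) / 3 := by nlinarith [Real.pi_gt_d2]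
    calc (121 / 4 : ℝ) = (11 / 2) ^ 2 := by norm_num
      _ ≤ _ := by gcongr
  refine ⟨h.trans_le ?_, h.trans_le ?_⟩
  · rw [mul_one_div]
    gcongr
  · gcongr
    norm_num

/-- `Σ_{(a,b,c) ∈ E₁¹(k)} 1/((a²+2)(b²+2)(c²+2)) < ((2π²−2)/3)²·1/(k²+2) < 36/(k²+2)`,
where `E₁¹(k) = {(a,b,c) : a,b,c ≥ 0, a + b + c = k, a ≤ b ≤ c}`. -/
theorem stmt19 (k : ℕ) (hk : 0 < k) :
    (∑ p ∈ (Finset.range (k+1) ×ˢ Finset.range (k+1) ×ˢ Finset.range (k+1)).filter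
        (fun p : ℕ × ℕ × ℕ =>
          p.1 + p.2.1 + p.2.2 = k ∧ p.1 ≤ p.2.1 ∧ p.2.1 ≤ p.2.2),
        (1 : ℝ) / (((p.1 : ℝ)^2 + 2) * ((p.2.1 : ℝ)^2 + 2) * ((p.2.2 : ℝ)^2 + 2)))
      < ((2*Real.pi^2 - 2)/3)^2 * (1 / ((k : ℝ)^2 + 2)) ∧
    (∑ p ∈ (Finset.range (k+1) ×ˢ Finset.range (k+1) ×ˢ Finset.range (k+1)).filter
        (fun p : ℕ × ℕ × ℕ =>
          p.1 + p.2.1 + p.2.2 = k ∧ p.1 ≤ p.2.1 ∧ p.2.1 ≤ p.2.2),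
        (1 : ℝ) / (((p.1 : ℝ)^2 + 2) * ((p.2.1 : ℝ)^2 + 2) * ((p.2.2 : ℝ)^2 + 2)))
      < 36 / ((k : ℝ)^2 + 2) :=
  stmt19_general k
end
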